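/- arXiv:2411.06412 — 3 statements merged into one kernel-verified Lean document; each statement's English description precedes it below -/
import Mathlib

section
/- Let s be a positive integer and let q be a complex number with 0 < |q| < 1. For 0 ≤ k ≤ s−1 set j(k) = 0 if k = 0 and j(k) = 1 if 1 ≤ k ≤ s−1. Then (stated with q replaced by q^{2s} so that all exponents are integers): Σ_{k=0}^{s−1} [ (Σ_{m=0}^{∞} (−1)^{sm+k} q^{(sm+k)(sm+k+1)} / (q^{2s}; q^{2s})_m) · (Σ_{n=0}^{∞} (−1)ⁿ q^{n(n + 2 j(k) s − 2k − 1)} / (q^{2s}; q^{2s})_n) ] = 0. -/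
/-- Finite q-Pochhammer symbol `(A; q)_n = ∏_{i=0}^{n-1} (1 - A q^i)`. -/
noncomputable def qPoch (A q : ℂ) (n : ℕ) : ℂ := ∏ i ∈ Finset.range n, (1 - A * q ^ i)

namespace Vanish


lemma exp_le_one_sub {t x : ℝ} (ht1 : t < 1) (hx0 : 0 ≤ x) (hxt : x ≤ t) :
    Real.exp (-(x / (1 - t))) ≤ 1 - x := by
  have h1t : 0 < 1 - t := by linarith
  have hy0 : 0 ≤ x / (1 - t) := div_nonneg hx0 h1t.le
  have hkey : 1 ≤ (1 - x) * (1 + x / (1 - t)) := by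
    have hexp : (1 - x) * (1 + x / (1 - t)) = ((1 - t) + x * (t - x)) / (1 - t) := by
      field_simp; ring
    rw [hexp, le_div_iff₀ h1t]
    nlinarith
  have h1 : Real.exp (x / (1 - t)) ≥ 1 + x / (1 - t) := by
    have := Real.add_one_le_exp (x / (1 - t)); linarith
  rw [Real.exp_neg]
  have hpos : 0 < 1 + x / (1 - t) := by linarith
  have h2 : (Real.exp (x / (1 - t)))⁻¹ ≤ (1 + x / (1 - t))⁻¹ := inv_anti₀ hpos h1
  have h3 : (1 + x / (1 - t))⁻¹ ≤ 1 - x := by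
    rw [inv_le_iff_one_le_mul₀ hpos]
    linarith [hkey]
  linarith

lemma qPoch_abs_lower (Q : ℂ) (hQ : ‖Q‖ < 1) (m : ℕ) :
    Real.exp (-(‖Q‖ / (1 - ‖Q‖) ^ 2)) ≤ ‖qPoch Q Q m‖ := by
  set t := ‖Q‖ with htdef
  have ht0 : 0 ≤ t := norm_nonneg Q
  have h1t : 0 < 1 - t := by linarith
  have hxt : ∀ i : ℕ, t ^ (i + 1) ≤ t := fun i =>
    pow_le_of_le_one ht0 hQ.le (Nat.succ_ne_zero i)
  have hx0 : ∀ i : ℕ, (0:ℝ) ≤ t ^ (i + 1) := fun i => pow_nonneg ht0 _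
  have step1 : Real.exp (-(t / (1 - t) ^ 2)) ≤
      Real.exp (∑ i ∈ Finset.range m, -(t ^ (i + 1) / (1 - t))) := by
    apply Real.exp_le_exp.2
    rw [Finset.sum_neg_distrib, neg_le_neg_iff, ← Finset.sum_div]
    have hgm : (1 - t) * ∑ i ∈ Finset.range m, t ^ i = 1 - t ^ m := by
      have := geom_sum_mul t m
      nlinarith [this]
    have hsum : ∑ i ∈ Finset.range m, t ^ (i + 1) = t * ∑ i ∈ Finset.range m, t ^ i := by
      rw [Finset.mul_sum]
      exact Finset.sum_congr rfl fun i _ => by rw [pow_succ']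
    have hle : ∑ i ∈ Finset.range m, t ^ i ≤ 1 / (1 - t) := by
      rw [le_div_iff₀ h1t]
      nlinarith [pow_nonneg ht0 m, hgm]
    rw [hsum, div_le_div_iff₀ h1t (by positivity)]
    have hb : (1 - t) * ∑ i ∈ Finset.range m, t ^ i ≤ 1 := by
      nlinarith [pow_nonneg ht0 m]
    nlinarith [mul_le_mul_of_nonneg_right hb (mul_nonneg ht0 h1t.le)]
  refine step1.trans ?_
  rw [Real.exp_sum]
  have step2 : ∀ i ∈ Finset.range m,
      Real.exp (-(t ^ (i + 1) / (1 - t))) ≤ 1 - t ^ (i + 1) := fun i _ =>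
    exp_le_one_sub hQ (hx0 i) (hxt i)
  have step3 : ∏ i ∈ Finset.range m, Real.exp (-(t ^ (i + 1) / (1 - t))) ≤
      ∏ i ∈ Finset.range m, (1 - t ^ (i + 1)) :=
    Finset.prod_le_prod (fun i _ => (Real.exp_pos _).le) step2
  refine step3.trans ?_
  have habs : ‖qPoch Q Q m‖ = ∏ i ∈ Finset.range m, ‖1 - Q * Q ^ i‖ := by
    rw [qPoch, norm_prod]
  rw [habs]
  apply Finset.prod_le_prod
  · intro i _
    have := hxt i; linarith [pow_nonneg ht0 (i+1)]
  · intro i _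
    have h1 : ‖Q * Q ^ i‖ = t ^ (i + 1) := by
      rw [norm_mul, norm_pow, pow_succ']
    calc 1 - t ^ (i + 1) = ‖(1 : ℂ)‖ - ‖Q * Q ^ i‖ := by
          rw [h1, norm_one]
      _ ≤ ‖1 - Q * Q ^ i‖ := by
          have := norm_sub_norm_le (1 : ℂ) (Q * Q ^ i)
          simpa using this



noncomputable def P (s : ℕ) (q : ℂ) (m : ℕ) : ℂ := qPoch (q ^ (2 * s)) (q ^ (2 * s)) m

noncomputable def w (s : ℕ) (q : ℂ) (N n : ℕ) : ℂ :=
  (q ^ (2 * s)) ^ (n * ((N + s - 1) / s)) / (P s q (N / s) * P s q n)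

noncomputable def EE (s : ℕ) (q : ℂ) (X n : ℕ) : ℂ :=
  if 1 ≤ n ∧ X % s = 0 then
    (q ^ (2 * s)) ^ (n * (X / s)) / (P s q (X / s) * P s q (n - 1)) else 0

lemma P_zero (s : ℕ) (q : ℂ) : P s q 0 = 1 := by simp [P, qPoch]

lemma P_succ (s : ℕ) (q : ℂ) (m : ℕ) :
    P s q (m + 1) = P s q m * (1 - (q ^ (2 * s)) ^ (m + 1)) := by
  rw [P, P, qPoch, qPoch, Finset.prod_range_succ, pow_succ']

lemma floor_eq {s : ℕ} (hs : 0 < s) {M t : ℕ} (ht : t < s) : (s * M + t) / s = M := by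
  rw [Nat.mul_add_div hs, Nat.div_eq_of_lt ht, add_zero]

lemma mod_eq {s : ℕ} (hs : 0 < s) {M t : ℕ} (ht : t < s) : (s * M + t) % s = t := by
  rw [Nat.mul_add_mod, Nat.mod_eq_of_lt ht]

lemma EE_pos {s : ℕ} (q : ℂ) {X n : ℕ} (hn : 1 ≤ n) (hX : X % s = 0) :
    EE s q X n = (q ^ (2 * s)) ^ (n * (X / s)) / (P s q (X / s) * P s q (n - 1)) := by
  rw [EE, if_pos ⟨hn, hX⟩]

lemma EE_zero {s : ℕ} (q : ℂ) {X : ℕ} : EE s q X 0 = 0 := by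
  rw [EE, if_neg (by omega)]

lemma EE_nmod {s : ℕ} (q : ℂ) {X n : ℕ} (hX : X % s ≠ 0) : EE s q X n = 0 := by
  rw [EE, if_neg (fun h => hX h.2)]

lemma stepNat {s : ℕ} {q : ℂ} (hs : 0 < s) (hq : ∀ m, P s q m ≠ 0)
    (hf : ∀ m : ℕ, (1 : ℂ) - (q ^ (2 * s)) ^ (m + 1) ≠ 0) (X n : ℕ) :
    w s q X n - w s q (X + 1) n = EE s q X n - EE s q (X + 1) (n + 1) := by
  obtain ⟨M, t, ht, rfl⟩ : ∃ M t, t < s ∧ X = s * M + t :=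
    ⟨X / s, X % s, Nat.mod_lt _ hs, by have := Nat.mod_add_div X s; omega⟩
  by_cases ht0 : t = 0
  · subst ht0
    by_cases hs1 : s = 1
    · -- Case 4 : s = 1
      subst hs1
      have e1 : (1 * M + 0) / 1 = M := by omega
      have e2 : (1 * M + 0 + 1) / 1 = M + 1 := by omega
      have e3 : (1 * M + 0 + 1 - 1) / 1 = M := by omega
      have e4 : (1 * M + 0 + 1 + 1 - 1) / 1 = M + 1 := by omega
      have m1 : (1 * M + 0) % 1 = 0 := by omega
      have m2 : (1 * M + 0 + 1) % 1 = 0 := by omega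
      have hPM := hq M
      have hPM1 := hq (M + 1)
      rcases n with _ | n'
      · rw [EE_zero, EE_pos q (by omega) m2]
        simp only [w, e1, e2, e3, e4, Nat.add_sub_cancel, Nat.zero_mul, pow_zero, P_zero]
        field_simp
        rw [P_succ 1 q M]
        ring
      · have hPn := hq n'
        have hPn1 := hq (n' + 1)
        have hfM := hf M
        have hfn := hf n'
        rw [EE_pos q (by omega) m1, EE_pos q (by omega) m2]
        simp only [w, e1, e2, e3, e4, Nat.add_sub_cancel]
        field_simp
        rw [P_succ 1 q M, P_succ 1 q n']
        ring
    · -- Case 2 : t = 0, s ≥ 2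
      have hs2 : 2 ≤ s := by omega
      have hms : s * M + s = s * (M + 1) := by rw [Nat.mul_succ]
      have e1 : (s * M + 0) / s = M := floor_eq hs (by omega)
      have e2 : (s * M + 0 + 1) / s = M := by
        rw [show s * M + 0 + 1 = s * M + 1 by omega]; exact floor_eq hs (by omega)
      have e3 : (s * M + 0 + s - 1) / s = M := by
        rw [show s * M + 0 + s - 1 = s * M + (s - 1) by omega]; exact floor_eq hs (by omega)
      have e4 : (s * M + 0 + 1 + s - 1) / s = M + 1 := by
        rw [show s * M + 0 + 1 + s - 1 = s * (M + 1) + 0 by rw [Nat.mul_succ]; omega]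
        exact floor_eq hs (by omega)
      have m1 : (s * M + 0) % s = 0 := mod_eq hs (by omega)
      have m2 : (s * M + 0 + 1) % s = 1 := by
        rw [show s * M + 0 + 1 = s * M + 1 by omega]; exact mod_eq hs (by omega)
      have hPM := hq M
      rcases n with _ | n'
      · rw [EE_zero, EE_nmod q (by omega)]
        simp only [w, e1, e2, e3, e4]
        simp
      · have hPn := hq n'
        have hPn1 := hq (n' + 1)
        have hfn := hf n'
        rw [EE_pos q (by omega) m1, EE_nmod q (by omega)]
        simp only [w, e1, e2, e3, e4, Nat.add_sub_cancel]
        field_simp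
        rw [P_succ s q n']
        ring
  · -- t ≥ 1
    by_cases hts : t + 1 = s
    · -- Case 3 : t = s - 1
      have e1 : (s * M + t) / s = M := floor_eq hs ht
      have e2 : (s * M + t + 1) / s = M + 1 := by
        rw [show s * M + t + 1 = s * (M + 1) + 0 by rw [Nat.mul_succ]; omega]
        exact floor_eq hs (by omega)
      have e3 : (s * M + t + s - 1) / s = M + 1 := by
        rw [show s * M + t + s - 1 = s * (M + 1) + (t - 1) by rw [Nat.mul_succ]; omega]
        exact floor_eq hs (by omega)
      have e4 : (s * M + t + 1 + s - 1) / s = M + 1 := by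
        rw [show s * M + t + 1 + s - 1 = s * (M + 1) + (s - 1) by rw [Nat.mul_succ]; omega]
        exact floor_eq hs (by omega)
      have m1 : (s * M + t) % s = t := mod_eq hs ht
      have m2 : (s * M + t + 1) % s = 0 := by
        rw [show s * M + t + 1 = s * (M + 1) + 0 by rw [Nat.mul_succ]; omega]
        exact mod_eq hs (by omega)
      have hPM := hq M
      have hPM1 := hq (M + 1)
      have hPn := hq n
      have hfM := hf M
      rw [EE_nmod q (by omega), EE_pos q (by omega) m2]
      simp only [w, e1, e2, e3, e4, Nat.add_sub_cancel]
      field_simp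
      rw [P_succ s q M]
      ring
    · -- Case 1 : 1 ≤ t, t + 1 < s
      have e1 : (s * M + t) / s = M := floor_eq hs ht
      have e2 : (s * M + t + 1) / s = M := by
        rw [show s * M + t + 1 = s * M + (t + 1) by omega]; exact floor_eq hs (by omega)
      have e3 : (s * M + t + s - 1) / s = M + 1 := by
        rw [show s * M + t + s - 1 = s * (M + 1) + (t - 1) by rw [Nat.mul_succ]; omega]
        exact floor_eq hs (by omega)
      have e4 : (s * M + t + 1 + s - 1) / s = M + 1 := by
        rw [show s * M + t + 1 + s - 1 = s * (M + 1) + t by rw [Nat.mul_succ]; omega]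
        exact floor_eq hs (by omega)
      have m1 : (s * M + t) % s = t := mod_eq hs ht
      have m2 : (s * M + t + 1) % s = t + 1 := by
        rw [show s * M + t + 1 = s * M + (t + 1) by omega]; exact mod_eq hs (by omega)
      rw [EE_nmod q (by omega), EE_nmod q (by omega)]
      simp only [w, e1, e2, e3, e4]
      simp

noncomputable def v (s : ℕ) (q : ℂ) (a : ℤ) (n : ℕ) : ℂ :=
  if 0 ≤ a + (n : ℤ) then w s q (a + (n : ℤ)).toNat n else 0

noncomputable def ee (s : ℕ) (q : ℂ) (a : ℤ) (n : ℕ) : ℂ :=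
  if 0 ≤ a + (n : ℤ) then EE s q (a + (n : ℤ)).toNat n else 0



noncomputable def cc (s : ℕ) (q : ℂ) : ℝ :=
  Real.exp (-(‖q ^ (2 * s)‖ / (1 - ‖q ^ (2 * s)‖) ^ 2))

lemma cc_pos {s : ℕ} {q : ℂ} : 0 < cc s q := Real.exp_pos _

lemma absQ_lt_one {s : ℕ} {q : ℂ} (hs : 0 < s) (hq1 : ‖q‖ < 1) :
    ‖q ^ (2 * s)‖ < 1 := by
  rw [norm_pow]
  exact pow_lt_one₀ (norm_nonneg q) hq1 (by omega)

lemma P_abs_lower {s : ℕ} {q : ℂ} (hs : 0 < s) (hq1 : ‖q‖ < 1) (m : ℕ) :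
    cc s q ≤ ‖P s q m‖ :=
  qPoch_abs_lower _ (absQ_lt_one hs hq1) m

lemma P_ne_zero {s : ℕ} {q : ℂ} (hs : 0 < s) (hq1 : ‖q‖ < 1) (m : ℕ) :
    P s q m ≠ 0 := by
  intro h
  have h1 := P_abs_lower hs hq1 (q := q) m
  rw [h] at h1
  simp only [norm_zero] at h1
  linarith [cc_pos (s := s) (q := q)]

lemma fac_ne_zero {s : ℕ} {q : ℂ} (hs : 0 < s) (hq1 : ‖q‖ < 1) (m : ℕ) :
    (1 : ℂ) - (q ^ (2 * s)) ^ (m + 1) ≠ 0 := by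
  have h := P_ne_zero hs hq1 (q := q) (m + 1)
  rw [P_succ] at h
  exact fun hc => h (by rw [hc, mul_zero])

lemma stepInt {s : ℕ} {q : ℂ} (hs : 0 < s) (hq1 : ‖q‖ < 1) (a : ℤ) (n : ℕ) :
    v s q a n - v s q (a + 1) n = ee s q a n - ee s q a (n + 1) := by
  simp only [v, ee, Nat.cast_add, Nat.cast_one]
  by_cases h0 : 0 ≤ a + (n : ℤ)
  · have h1 : 0 ≤ a + 1 + (n : ℤ) := by omega
    have h2 : 0 ≤ a + ((n : ℤ) + 1) := by omega
    have hX1 : (a + 1 + (n : ℤ)).toNat = (a + (n : ℤ)).toNat + 1 := by omega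
    have hX2 : (a + ((n : ℤ) + 1)).toNat = (a + (n : ℤ)).toNat + 1 := by omega
    rw [if_pos h0, if_pos h1, if_pos h0, if_pos h2, hX1, hX2]
    exact stepNat hs (P_ne_zero hs hq1) (fac_ne_zero hs hq1) _ n
  · by_cases h1 : a + (n : ℤ) = -1
    · have hv1 : 0 ≤ a + 1 + (n : ℤ) := by omega
      have hv1' : (a + 1 + (n : ℤ)).toNat = 0 := by omega
      have he2 : 0 ≤ a + ((n : ℤ) + 1) := by omega
      have he2' : (a + ((n : ℤ) + 1)).toNat = 0 := by omega
      rw [if_neg h0, if_pos hv1, if_neg h0, if_pos he2, hv1', he2']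
      have hw : w s q 0 n = EE s q 0 (n + 1) := by
        rw [w, EE, if_pos ⟨by omega, by simp⟩]
        have hd1 : (0 + s - 1) / s = 0 := Nat.div_eq_of_lt (by omega)
        rw [hd1, Nat.zero_div]
        simp
      rw [hw]
    · have h2 : ¬(0 ≤ a + 1 + (n : ℤ)) := by omega
      have h3 : ¬(0 ≤ a + ((n : ℤ) + 1)) := by omega
      rw [if_neg h0, if_neg h2, if_neg h0, if_neg h3, sub_zero]

lemma norm_w_le {s : ℕ} {q : ℂ} (hs : 0 < s) (hq1 : ‖q‖ < 1)
    {N : ℕ} (hN : 1 ≤ N) (n : ℕ) :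
    ‖w s q N n‖ ≤ 1 / (cc s q * cc s q) * ‖q‖ ^ n := by
  have hc : (0:ℝ) < cc s q := cc_pos
  have hr0 : 0 ≤ ‖q‖ := norm_nonneg q
  have hceil : 1 ≤ (N + s - 1) / s := by
    rw [Nat.le_div_iff_mul_le hs]; omega
  rw [w, norm_div, norm_mul, norm_pow]
  have hnum : ‖q ^ (2 * s)‖ ^ (n * ((N + s - 1) / s)) ≤ ‖q‖ ^ n := by
    rw [norm_pow, ← pow_mul]
    apply pow_le_pow_of_le_one hr0 hq1.le
    calc n = 1 * n := (one_mul n).symm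
      _ ≤ ((2 * s) * ((N + s - 1) / s)) * n := by
          apply Nat.mul_le_mul_right
          calc 1 = 1 * 1 := rfl
            _ ≤ (2 * s) * ((N + s - 1) / s) := Nat.mul_le_mul (by omega) hceil
      _ = 2 * s * (n * ((N + s - 1) / s)) := by ring
  have hden : cc s q * cc s q ≤ ‖P s q (N / s)‖ * ‖P s q n‖ :=
    mul_le_mul (P_abs_lower hs hq1 _) (P_abs_lower hs hq1 _) hc.le (norm_nonneg _)
  have hden0 : (0:ℝ) < ‖P s q (N / s)‖ * ‖P s q n‖ :=
    mul_pos (lt_of_lt_of_le hc (P_abs_lower hs hq1 _))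
      (lt_of_lt_of_le hc (P_abs_lower hs hq1 _))
  rw [div_le_iff₀ hden0]
  calc ‖q ^ (2 * s)‖ ^ (n * ((N + s - 1) / s))
      ≤ ‖q‖ ^ n := hnum
    _ = 1 / (cc s q * cc s q) * ‖q‖ ^ n * (cc s q * cc s q) := by
        field_simp
    _ ≤ 1 / (cc s q * cc s q) * ‖q‖ ^ n *
          (‖P s q (N / s)‖ * ‖P s q n‖) := by
        apply mul_le_mul_of_nonneg_left hden
        positivity

lemma norm_EE_le {s : ℕ} {q : ℂ} (hs : 0 < s) (hq1 : ‖q‖ < 1)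
    {X : ℕ} (hX : 1 ≤ X) (n : ℕ) :
    ‖EE s q X n‖ ≤ 1 / (cc s q * cc s q) * ‖q‖ ^ n := by
  have hc : (0:ℝ) < cc s q := cc_pos
  have hr0 : 0 ≤ ‖q‖ := norm_nonneg q
  rw [EE]
  split_ifs with h
  · obtain ⟨hn, hmod⟩ := h
    have hXs : s ≤ X := by
      rcases le_or_gt s X with h' | h'
      · exact h'
      · exfalso; rw [Nat.mod_eq_of_lt h'] at hmod; omega
    have hfl : 1 ≤ X / s := by rw [Nat.le_div_iff_mul_le hs]; omega
    rw [norm_div, norm_mul, norm_pow]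
    have hnum : ‖q ^ (2 * s)‖ ^ (n * (X / s)) ≤ ‖q‖ ^ n := by
      rw [norm_pow, ← pow_mul]
      apply pow_le_pow_of_le_one hr0 hq1.le
      calc n = 1 * n := (one_mul n).symm
        _ ≤ ((2 * s) * (X / s)) * n := by
            apply Nat.mul_le_mul_right
            calc 1 = 1 * 1 := rfl
              _ ≤ (2 * s) * (X / s) := Nat.mul_le_mul (by omega) hfl
        _ = 2 * s * (n * (X / s)) := by ring
    have hden : cc s q * cc s q ≤
        ‖P s q (X / s)‖ * ‖P s q (n - 1)‖ :=
      mul_le_mul (P_abs_lower hs hq1 _) (P_abs_lower hs hq1 _) hc.le (norm_nonneg _)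
    have hden0 : (0:ℝ) < ‖P s q (X / s)‖ * ‖P s q (n - 1)‖ :=
      mul_pos (lt_of_lt_of_le hc (P_abs_lower hs hq1 _))
        (lt_of_lt_of_le hc (P_abs_lower hs hq1 _))
    rw [div_le_iff₀ hden0]
    calc ‖q ^ (2 * s)‖ ^ (n * (X / s))
        ≤ ‖q‖ ^ n := hnum
      _ = 1 / (cc s q * cc s q) * ‖q‖ ^ n * (cc s q * cc s q) := by field_simp
      _ ≤ 1 / (cc s q * cc s q) * ‖q‖ ^ n *
            (‖P s q (X / s)‖ * ‖P s q (n - 1)‖) := by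
          apply mul_le_mul_of_nonneg_left hden
          positivity
  · simp only [norm_zero]
    positivity

lemma summable_v {s : ℕ} {q : ℂ} (hs : 0 < s) (hq0 : 0 < ‖q‖)
    (hq1 : ‖q‖ < 1) (a : ℤ) : Summable (v s q a) := by
  set k := (1 - a).toNat with hk
  apply (summable_nat_add_iff k).1
  have hgeo : Summable (fun n : ℕ => 1 / (cc s q * cc s q) * ‖q‖ ^ (n + k)) := by
    simp_rw [pow_add]
    apply Summable.mul_left
    exact (summable_geometric_of_lt_one (norm_nonneg q) hq1).mul_right _
  apply Summable.of_norm_bounded hgeo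
  intro n
  have hpos : 1 ≤ a + ((n + k : ℕ) : ℤ) := by push_cast; omega
  have h0 : 0 ≤ a + ((n + k : ℕ) : ℤ) := by omega
  have hN : 1 ≤ (a + ((n + k : ℕ) : ℤ)).toNat := by omega
  rw [v, if_pos h0]
  exact norm_w_le hs hq1 hN (n + k)

lemma summable_ee {s : ℕ} {q : ℂ} (hs : 0 < s) (hq0 : 0 < ‖q‖)
    (hq1 : ‖q‖ < 1) (a : ℤ) : Summable (ee s q a) := by
  set k := (1 - a).toNat with hk
  apply (summable_nat_add_iff k).1
  have hgeo : Summable (fun n : ℕ => 1 / (cc s q * cc s q) * ‖q‖ ^ (n + k)) := by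
    simp_rw [pow_add]
    apply Summable.mul_left
    exact (summable_geometric_of_lt_one (norm_nonneg q) hq1).mul_right _
  apply Summable.of_norm_bounded hgeo
  intro n
  have hpos : 1 ≤ a + ((n + k : ℕ) : ℤ) := by push_cast; omega
  have h0 : 0 ≤ a + ((n + k : ℕ) : ℤ) := by omega
  have hN : 1 ≤ (a + ((n + k : ℕ) : ℤ)).toNat := by omega
  rw [ee, if_pos h0]
  exact norm_EE_le hs hq1 hN (n + k)

noncomputable def SS (s : ℕ) (q : ℂ) (a : ℤ) : ℂ := ∑' n, v s q a n

lemma SS_step {s : ℕ} {q : ℂ} (hs : 0 < s) (hq0 : 0 < ‖q‖)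
    (hq1 : ‖q‖ < 1) (a : ℤ) : SS s q a = SS s q (a + 1) := by
  have h1 := summable_v hs hq0 hq1 (q := q) a
  have h2 := summable_v hs hq0 hq1 (q := q) (a + 1)
  have h3 := summable_ee hs hq0 hq1 (q := q) a
  have h4 : Summable (fun n => ee s q a (n + 1)) := (summable_nat_add_iff 1).2 h3
  have key : SS s q a - SS s q (a + 1) = 0 := by
    rw [SS, SS, ← Summable.tsum_sub h1 h2]
    have : ∀ n : ℕ, v s q a n - v s q (a + 1) n = ee s q a n - ee s q a (n + 1) :=
      stepInt hs hq1 a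
    rw [tsum_congr this, Summable.tsum_sub h3 h4]
    have h5 : ∑' n, ee s q a n = ee s q a 0 + ∑' n, ee s q a (n + 1) := Summable.tsum_eq_zero_add h3
    have h6 : ee s q a 0 = 0 := by
      rw [ee]
      split_ifs with h
      · rw [EE, if_neg (by omega)]
      · rfl
    rw [h5, h6, zero_add, sub_self]
  exact sub_eq_zero.1 key



lemma SS_const {s : ℕ} {q : ℂ} (hs : 0 < s) (hq0 : 0 < ‖q‖)
    (hq1 : ‖q‖ < 1) (a : ℤ) : SS s q a = SS s q 0 := by
  induction a using Int.induction_on with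
  | zero => rfl
  | succ n ih => rw [← SS_step hs hq0 hq1 (n : ℤ)]; exact ih
  | pred n ih =>
      have h := SS_step hs hq0 hq1 (-(n : ℤ) - 1)
      rw [show (-(n : ℤ) - 1 + 1) = -(n : ℤ) by ring] at h
      rw [h]; exact ih

noncomputable def sgn (a : ℤ) : ℂ := if Even a then 1 else -1

noncomputable def uu (s : ℕ) (q : ℂ) (z : ℤ × ℕ) : ℂ :=
  (sgn z.1 * q ^ (z.1 * (z.1 + 1))) * v s q z.1 z.2

noncomputable def fF (s : ℕ) (q : ℂ) (a : ℤ) : ℂ :=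
  (sgn a * q ^ (a * (a + 1))) * SS s q a

lemma abs_sgn (a : ℤ) : ‖sgn a‖ = 1 := by
  rw [sgn]; split_ifs <;> simp

lemma sceil_ge {s : ℕ} (hs : 0 < s) (N : ℕ) : N ≤ s * ((N + s - 1) / s) := by
  have h := Nat.div_add_mod (N + s - 1) s
  have hm : (N + s - 1) % s < s := Nat.mod_lt _ hs
  set K := (N + s - 1) / s
  set R := (N + s - 1) % s
  generalize hA : s * K = A at h ⊢
  omega

lemma uu_bound {s : ℕ} {q : ℂ} (hs : 0 < s) (hq0 : 0 < ‖q‖)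
    (hq1 : ‖q‖ < 1) (N n : ℕ) :
    ‖uu s q ((N : ℤ) - n, n)‖ ≤
      (‖q‖)⁻¹ / (cc s q * cc s q) * (‖q‖ ^ N * ‖q‖ ^ n) := by
  set r := ‖q‖ with hr
  have hc : (0:ℝ) < cc s q := cc_pos
  have hrne : r ≠ 0 := ne_of_gt hq0
  set a : ℤ := (N : ℤ) - n with ha
  have h0 : 0 ≤ a + (n : ℤ) := by omega
  have htn : (a + (n : ℤ)).toNat = N := by omega
  set K := (N + s - 1) / s with hK
  have hvw : v s q a n = w s q N n := by rw [v, if_pos h0, htn]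
  have habs : ‖uu s q (a, n)‖ =
      (r ^ (a * (a + 1)) * r ^ (2 * s * (n * K))) /
        (‖P s q (N / s)‖ * ‖P s q n‖) := by
    rw [uu, norm_mul, norm_mul, norm_zpow, abs_sgn, one_mul, hvw, w, norm_div, norm_mul,
        norm_pow, norm_pow, ← pow_mul, ← hr, ← hK, mul_div_assoc]
  rw [habs]
  -- numerator bound
  have hsceil : (N : ℤ) ≤ (s : ℤ) * K := by exact_mod_cast sceil_ge hs N
  have hEb : ((N : ℤ) + n - 1) ≤ a * (a + 1) + (2 * s * (n * K) : ℕ) := by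
    push_cast
    nlinarith [sq_nonneg ((n : ℤ) - 1), sq_nonneg (N : ℤ),
      mul_le_mul_of_nonneg_left hsceil (by positivity : (0:ℤ) ≤ 2 * (n : ℤ))]
  have hnum : r ^ (a * (a + 1)) * r ^ (2 * s * (n * K)) ≤ r⁻¹ * (r ^ N * r ^ n) := by
    have h1 : r ^ (a * (a + 1)) * r ^ (2 * s * (n * K)) =
        r ^ (a * (a + 1) + (2 * s * (n * K) : ℕ)) := by
      rw [zpow_add₀ hrne, zpow_natCast]
    have h2 : r ^ (a * (a + 1) + (2 * s * (n * K) : ℕ)) ≤ r ^ ((N : ℤ) + n - 1) :=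
      zpow_le_zpow_right_of_le_one₀ hq0 hq1.le hEb
    have h3 : r ^ ((N : ℤ) + n - 1) = r⁻¹ * (r ^ N * r ^ n) := by
      rw [show (N : ℤ) + n - 1 = (-1) + ((N : ℤ) + (n : ℤ)) by ring, zpow_add₀ hrne,
        zpow_add₀ hrne, zpow_natCast, zpow_natCast, zpow_neg_one]
    rw [h1, ← h3]
    exact h2
  have hden : cc s q * cc s q ≤ ‖P s q (N / s)‖ * ‖P s q n‖ :=
    mul_le_mul (P_abs_lower hs hq1 _) (P_abs_lower hs hq1 _) hc.le (norm_nonneg _)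
  have hden0 : (0:ℝ) < cc s q * cc s q := mul_pos hc hc
  calc (r ^ (a * (a + 1)) * r ^ (2 * s * (n * K))) /
        (‖P s q (N / s)‖ * ‖P s q n‖)
      ≤ (r⁻¹ * (r ^ N * r ^ n)) / (cc s q * cc s q) := by
        apply div_le_div₀ (by positivity) hnum hden0 hden
    _ = r⁻¹ / (cc s q * cc s q) * (r ^ N * r ^ n) := by ring

noncomputable def iota : ℕ × ℕ → ℤ × ℕ := fun p => ((p.1 : ℤ) - p.2, p.2)

lemma iota_inj : Function.Injective iota := by
  rintro ⟨N, n⟩ ⟨N', n'⟩ h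
  simp only [iota, Prod.mk.injEq] at h
  obtain ⟨h1, h2⟩ := h
  subst h2
  have : N = N' := by omega
  simp [this]

lemma uu_supp {s : ℕ} {q : ℂ} : Function.support (uu s q) ⊆ Set.range iota := by
  intro z hz
  rcases z with ⟨a, n⟩
  by_cases h0 : 0 ≤ a + (n : ℤ)
  · exact ⟨((a + (n : ℤ)).toNat, n), by
      simp only [iota, Prod.mk.injEq]
      exact ⟨by omega, trivial⟩⟩
  · exfalso
    apply hz
    rw [uu]
    simp only [v, if_neg h0, mul_zero]

lemma summable_T {s : ℕ} {q : ℂ} (hs : 0 < s) (hq0 : 0 < ‖q‖)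
    (hq1 : ‖q‖ < 1) : Summable (fun p : ℕ × ℕ => uu s q (iota p)) := by
  have hgeo : Summable (fun n : ℕ => ‖q‖ ^ n) :=
    summable_geometric_of_lt_one (norm_nonneg q) hq1
  have hb : Summable (fun p : ℕ × ℕ =>
      (‖q‖)⁻¹ / (cc s q * cc s q) * (‖q‖ ^ p.1 * ‖q‖ ^ p.2)) :=
    (hgeo.mul_of_nonneg hgeo (fun n => by positivity) (fun n => by positivity)).mul_left _
  apply Summable.of_norm_bounded hb
  rintro ⟨N, n⟩
  exact uu_bound hs hq0 hq1 N n

lemma uu_supp' {s : ℕ} {q : ℂ} : ∀ z ∉ Set.range iota, uu s q z = 0 := fun z hz =>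
  Function.notMem_support.1 fun h => hz (uu_supp h)

lemma summable_uu {s : ℕ} {q : ℂ} (hs : 0 < s) (hq0 : 0 < ‖q‖)
    (hq1 : ‖q‖ < 1) : Summable (uu s q) :=
  (iota_inj.summable_iff uu_supp').1 (summable_T hs hq0 hq1)

lemma tsum_T_eq {s : ℕ} {q : ℂ} (hs : 0 < s) (hq0 : 0 < ‖q‖)
    (hq1 : ‖q‖ < 1) :
    ∑' p : ℕ × ℕ, uu s q (iota p) = ∑' a : ℤ, fF s q a := by
  rw [iota_inj.tsum_eq uu_supp, Summable.tsum_prod (summable_uu hs hq0 hq1)]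
  apply tsum_congr
  intro a
  rw [fF, SS, ← tsum_mul_left]
  rfl

lemma fF_neg {s : ℕ} {q : ℂ} (hs : 0 < s) (hq0 : 0 < ‖q‖)
    (hq1 : ‖q‖ < 1) (a : ℤ) : fF s q (-1 - a) = - fF s q a := by
  rw [fF, fF]
  have hS : SS s q (-1 - a) = SS s q a := by
    rw [SS_const hs hq0 hq1 (-1 - a), SS_const hs hq0 hq1 a]
  have hpow : ((-1 : ℤ) - a) * ((-1 - a) + 1) = a * (a + 1) := by ring
  have hsgn : sgn (-1 - a) = - sgn a := by
    rw [sgn, sgn]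
    have h1 : ((-1 : ℤ) - a) = -(a + 1) := by ring
    simp only [h1, even_neg, Int.even_add_one]
    by_cases h : Even a <;> simp [h]
  rw [hS, hpow, hsgn]
  ring

lemma tsum_fF_zero {s : ℕ} {q : ℂ} (hs : 0 < s) (hq0 : 0 < ‖q‖)
    (hq1 : ‖q‖ < 1) : ∑' a : ℤ, fF s q a = 0 := by
  have he := (Equiv.subLeft (-1 : ℤ)).tsum_eq (fF s q)
  simp only [Equiv.subLeft_apply] at he
  have h2 : ∑' a : ℤ, fF s q (-1 - a) = - ∑' a : ℤ, fF s q a := by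
    rw [← tsum_neg]
    exact tsum_congr fun a => fF_neg hs hq0 hq1 a
  have h3 : - ∑' a : ℤ, fF s q a = ∑' a : ℤ, fF s q a := by rw [← h2, he]
  have h4 : (∑' a : ℤ, fF s q a) + ∑' a : ℤ, fF s q a = 0 := by
    nth_rewrite 1 [← h3]; ring
  exact add_self_eq_zero.1 h4



lemma term_eq {s : ℕ} {q : ℂ} (hs : 0 < s) (hq : q ≠ 0) {k : ℕ} (hk : k < s) (m n : ℕ) :
    ((-1 : ℂ) ^ (s * m + k) * q ^ ((s * m + k) * (s * m + k + 1)) / P s q m) *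
      ((-1 : ℂ) ^ n *
        q ^ ((n : ℤ) * ((n : ℤ) + 2 * (if k = 0 then (0 : ℤ) else 1) * (s : ℤ)
          - 2 * (k : ℤ) - 1)) / P s q n)
    = uu s q (iota (m * s + k, n)) := by
  set J : ℕ := if k = 0 then 0 else 1 with hJdef
  have hJ : (if k = 0 then (0 : ℤ) else 1) = (J : ℤ) := by
    by_cases h : k = 0 <;> simp [hJdef, h]
  set N : ℕ := s * m + k with hN
  have hmN : m * s + k = N := by rw [hN]; ring
  have hfloor : N / s = m := floor_eq hs hk
  have hceil : (N + s - 1) / s = m + J := by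
    by_cases h : k = 0
    · have : N + s - 1 = s * m + (s - 1) := by omega
      rw [this, floor_eq hs (by omega)]
      simp [hJdef, h]
    · have : N + s - 1 = s * (m + 1) + (k - 1) := by rw [Nat.mul_succ]; omega
      rw [this, floor_eq hs (by omega)]
      simp [hJdef, h]
  set a : ℤ := (N : ℤ) - n with ha
  have h0 : 0 ≤ a + (n : ℤ) := by omega
  have htn : (a + (n : ℤ)).toNat = N := by omega
  have hRHS : uu s q (iota (m * s + k, n)) =
      (sgn a * q ^ (a * (a + 1))) * ((q ^ (2 * s)) ^ (n * (m + J)) / (P s q m * P s q n)) := by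
    rw [hmN, iota, uu]
    simp only
    rw [v, if_pos h0, htn, w, hfloor, hceil]
  rw [hRHS]
  have hsgn : (-1 : ℂ) ^ N * (-1 : ℂ) ^ n = sgn a := by
    rw [← pow_add, sgn]
    have hpar : Even a ↔ Even (N + n) := by
      rw [ha, Int.even_sub, Nat.even_add, Int.even_coe_nat, Int.even_coe_nat]
    by_cases h : Even (N + n)
    · rw [if_pos (hpar.2 h), h.neg_one_pow]
    · rw [if_neg (fun hc => h (hpar.1 hc)),
        (Nat.not_even_iff_odd.1 h).neg_one_pow]
  have hpow : q ^ (N * (N + 1)) *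
      q ^ ((n : ℤ) * ((n : ℤ) + 2 * (if k = 0 then (0 : ℤ) else 1) * (s : ℤ)
        - 2 * (k : ℤ) - 1)) =
      q ^ (a * (a + 1)) * (q ^ (2 * s)) ^ (n * (m + J)) := by
    rw [hJ, ← zpow_natCast q (N * (N + 1)), ← zpow_add₀ hq, ← pow_mul,
      ← zpow_natCast q (2 * s * (n * (m + J))), ← zpow_add₀ hq]
    congr 1
    rw [ha]
    simp only [hN]
    push_cast
    ring
  calc ((-1 : ℂ) ^ N * q ^ (N * (N + 1)) / P s q m) *
        ((-1 : ℂ) ^ n * q ^ ((n : ℤ) * ((n : ℤ) + 2 * (if k = 0 then (0 : ℤ) else 1) * (s : ℤ)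
          - 2 * (k : ℤ) - 1)) / P s q n)
      = ((-1 : ℂ) ^ N * (-1 : ℂ) ^ n) *
          (q ^ (N * (N + 1)) *
            q ^ ((n : ℤ) * ((n : ℤ) + 2 * (if k = 0 then (0 : ℤ) else 1) * (s : ℤ)
              - 2 * (k : ℤ) - 1))) / (P s q m * P s q n) := by
        ring
    _ = (sgn a * q ^ (a * (a + 1))) * ((q ^ (2 * s)) ^ (n * (m + J)) / (P s q m * P s q n)) := by
        rw [hsgn, hpow]; ring

lemma summable_A {s : ℕ} {q : ℂ} (hs : 0 < s) (hq1 : ‖q‖ < 1) (k : ℕ) :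
    Summable (fun m : ℕ =>
      ‖(-1 : ℂ) ^ (s * m + k) * q ^ ((s * m + k) * (s * m + k + 1)) / P s q m‖) := by
  have hc : (0:ℝ) < cc s q := cc_pos
  have hr0 : 0 ≤ ‖q‖ := norm_nonneg q
  have hb : Summable (fun m : ℕ => 1 / cc s q * ‖q‖ ^ m) :=
    (summable_geometric_of_lt_one hr0 hq1).mul_left _
  apply Summable.of_nonneg_of_le (fun m => norm_nonneg _) _ hb
  intro m
  have h1 : ‖(-1 : ℂ) ^ (s * m + k)‖ = 1 := by simp
  rw [norm_div, norm_mul, h1, one_mul, norm_pow]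
  have hnum : ‖q‖ ^ ((s * m + k) * (s * m + k + 1)) ≤ ‖q‖ ^ m := by
    apply pow_le_pow_of_le_one hr0 hq1.le
    calc m ≤ s * m + k := by
          have := Nat.le_mul_of_pos_left m hs
          omega
      _ = (s * m + k) * 1 := (mul_one _).symm
      _ ≤ (s * m + k) * (s * m + k + 1) := Nat.mul_le_mul_left _ (by omega)
  have hden := P_abs_lower hs hq1 (q := q) m
  have hP0 : (0:ℝ) < ‖P s q m‖ := lt_of_lt_of_le hc hden
  rw [div_le_iff₀ hP0]
  calc ‖q‖ ^ ((s * m + k) * (s * m + k + 1)) ≤ ‖q‖ ^ m := hnum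
    _ = 1 / cc s q * ‖q‖ ^ m * cc s q := by field_simp
    _ ≤ 1 / cc s q * ‖q‖ ^ m * ‖P s q m‖ := by
        apply mul_le_mul_of_nonneg_left hden
        positivity

lemma summable_B {s : ℕ} {q : ℂ} (hs : 0 < s) (hq0 : 0 < ‖q‖)
    (hq1 : ‖q‖ < 1) {k : ℕ} (hk : k < s) :
    Summable (fun n : ℕ =>
      ‖(-1 : ℂ) ^ n * q ^ ((n : ℤ) * ((n : ℤ) + 2 * (if k = 0 then (0 : ℤ) else 1) * (s : ℤ)
          - 2 * (k : ℤ) - 1)) / P s q n‖) := by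
  have hc : (0:ℝ) < cc s q := cc_pos
  have hr0 : 0 ≤ ‖q‖ := norm_nonneg q
  have hrne : ‖q‖ ≠ 0 := ne_of_gt hq0
  have hb : Summable (fun n : ℕ =>
      (‖q‖ ^ (-((s : ℤ) * s)) / cc s q) * ‖q‖ ^ n) :=
    (summable_geometric_of_lt_one hr0 hq1).mul_left _
  apply Summable.of_nonneg_of_le (fun n => norm_nonneg _) _ hb
  intro n
  have h1 : ‖(-1 : ℂ) ^ n‖ = 1 := by simp
  rw [norm_div, norm_mul, h1, one_mul, norm_zpow]
  have hEb : (n : ℤ) - (s : ℤ) * s ≤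
      (n : ℤ) * ((n : ℤ) + 2 * (if k = 0 then (0 : ℤ) else 1) * (s : ℤ)
        - 2 * (k : ℤ) - 1) := by
    have hn0 : (0:ℤ) ≤ (n:ℤ) := Int.ofNat_nonneg n
    have hs1 : (1:ℤ) ≤ (s:ℤ) := by exact_mod_cast hs
    have hks : (k:ℤ) ≤ (s:ℤ) - 1 := by
      have : (k:ℤ) < (s:ℤ) := by exact_mod_cast hk
      omega
    by_cases h : k = 0
    · rw [if_pos h, h]
      push_cast
      nlinarith [sq_nonneg ((n:ℤ) - 1)]
    · rw [if_neg h]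
      have hk1 : (1:ℤ) ≤ (k:ℤ) := by
        have : 1 ≤ k := Nat.one_le_iff_ne_zero.2 h
        exact_mod_cast this
      nlinarith [mul_nonneg hn0 (by omega : (0:ℤ) ≤ (n:ℤ) + 2 * (s:ℤ) - 2 * (k:ℤ) - 1 - 1),
        sq_nonneg ((s:ℤ))]
  have hnum : ‖q‖ ^ ((n : ℤ) * ((n : ℤ) + 2 * (if k = 0 then (0 : ℤ) else 1) * (s : ℤ)
        - 2 * (k : ℤ) - 1)) ≤ ‖q‖ ^ (-((s : ℤ) * s)) * ‖q‖ ^ n := by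
    have h2 := zpow_le_zpow_right_of_le_one₀ hq0 hq1.le hEb
    have h3 : ‖q‖ ^ ((n : ℤ) - (s : ℤ) * s) =
        ‖q‖ ^ (-((s : ℤ) * s)) * ‖q‖ ^ n := by
      rw [show (n : ℤ) - (s : ℤ) * s = -((s:ℤ) * s) + (n:ℤ) by ring, zpow_add₀ hrne,
        zpow_natCast]
    rw [← h3]
    exact h2
  have hden := P_abs_lower hs hq1 (q := q) n
  have hP0 : (0:ℝ) < ‖P s q n‖ := lt_of_lt_of_le hc hden
  rw [div_le_iff₀ hP0]
  calc ‖q‖ ^ ((n : ℤ) * ((n : ℤ) + 2 * (if k = 0 then (0 : ℤ) else 1) * (s : ℤ)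
        - 2 * (k : ℤ) - 1))
      ≤ ‖q‖ ^ (-((s : ℤ) * s)) * ‖q‖ ^ n := hnum
    _ = ‖q‖ ^ (-((s : ℤ) * s)) / cc s q * ‖q‖ ^ n * cc s q := by
        field_simp
    _ ≤ ‖q‖ ^ (-((s : ℤ) * s)) / cc s q * ‖q‖ ^ n *
          ‖P s q n‖ := by
        apply mul_le_mul_of_nonneg_left hden
        have : (0:ℝ) < ‖q‖ ^ (-((s : ℤ) * s)) := zpow_pos hq0 _
        positivity


end Vanish

open Vanish

/-- The vanishing identity (Corollary 1.7), stated with `q` replaced by `q^(2s)`. -/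
theorem vanishing_identity (s : ℕ) (hs : 0 < s) (q : ℂ)
    (hq0 : 0 < ‖q‖) (hq1 : ‖q‖ < 1) :
    ∑ k ∈ Finset.range s,
      ((∑' m : ℕ, (-1 : ℂ) ^ (s * m + k) * q ^ ((s * m + k) * (s * m + k + 1)) /
          qPoch (q ^ (2 * s)) (q ^ (2 * s)) m) *
        (∑' n : ℕ, (-1 : ℂ) ^ n *
            q ^ ((n : ℤ) * ((n : ℤ) + 2 * (if k = 0 then (0 : ℤ) else 1) * (s : ℤ)
              - 2 * (k : ℤ) - 1)) / qPoch (q ^ (2 * s)) (q ^ (2 * s)) n))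
    = 0 := by
  haveI : NeZero s := ⟨hs.ne'⟩
  have hqne : q ≠ 0 := by
    intro h; rw [h] at hq0; simp at hq0
  have hPdef : qPoch (q ^ (2 * s)) (q ^ (2 * s)) = P s q := rfl
  rw [show (0 : ℂ) = ∑' a : ℤ, fF s q a from (tsum_fF_zero hs hq0 hq1).symm,
    ← tsum_T_eq hs hq0 hq1]
  simp only [hPdef]
  have hterm : ∀ k ∈ Finset.range s,
      ((∑' m : ℕ, (-1 : ℂ) ^ (s * m + k) * q ^ ((s * m + k) * (s * m + k + 1)) / P s q m) *
        (∑' n : ℕ, (-1 : ℂ) ^ n *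
            q ^ ((n : ℤ) * ((n : ℤ) + 2 * (if k = 0 then (0 : ℤ) else 1) * (s : ℤ)
              - 2 * (k : ℤ) - 1)) / P s q n))
      = ∑' p : ℕ × ℕ, uu s q (iota (p.1 * s + k, p.2)) := by
    intro k hk
    rw [Finset.mem_range] at hk
    rw [tsum_mul_tsum_of_summable_norm (summable_A hs hq1 k) (summable_B hs hq0 hq1 hk)]
    exact tsum_congr fun p => term_eq hs hqne hk p.1 p.2
  rw [Finset.sum_congr rfl hterm]
  have hGsum : Summable (fun p : ℕ × ℕ => uu s q (iota p)) := summable_T hs hq0 hq1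
  let e : (ℕ × Fin s) × ℕ ≃ ℕ × ℕ := Equiv.prodCongr (Nat.divModEquiv s).symm (Equiv.refl ℕ)
  let e2 : Fin s × (ℕ × ℕ) ≃ (ℕ × Fin s) × ℕ :=
    ⟨fun x => ((x.2.1, x.1), x.2.2), fun y => (y.1.2, (y.1.1, y.2)),
      fun _ => rfl, fun _ => rfl⟩
  let e3 : Fin s × (ℕ × ℕ) ≃ ℕ × ℕ := e2.trans e
  have hsum3 : Summable (fun z => uu s q (iota (e3 z))) :=
    (e3.summable_iff (f := fun p : ℕ × ℕ => uu s q (iota p))).2 hGsum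
  calc ∑ k ∈ Finset.range s, ∑' p : ℕ × ℕ, uu s q (iota (p.1 * s + k, p.2))
      = ∑ k : Fin s, ∑' p : ℕ × ℕ, uu s q (iota (p.1 * s + (k : ℕ), p.2)) :=
        (Fin.sum_univ_eq_sum_range
          (fun k => ∑' p : ℕ × ℕ, uu s q (iota (p.1 * s + k, p.2))) s).symm
    _ = ∑' k : Fin s, ∑' p : ℕ × ℕ, uu s q (iota (e3 (k, p))) := by
        rw [tsum_fintype]
        apply Finset.sum_congr rfl
        intro k _
        apply tsum_congr
        intro p
        congr 1
    _ = ∑' z : Fin s × (ℕ × ℕ), uu s q (iota (e3 z)) := (Summable.tsum_prod hsum3).symm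
    _ = ∑' p : ℕ × ℕ, uu s q (iota p) := e3.tsum_eq (fun p : ℕ × ℕ => uu s q (iota p))
end

section
/- Let s be a positive integer, let q be a complex number with |q| < 1, and let a, b be complex numbers with |aq| < 1 and |bq| < 1 (so that all denominators are nonzero; it suffices that no factor 1 − a q^i or 1 − b q^i with i ≥ 1 vanishes). For 0 ≤ k ≤ s−1 set j(k) = 0 if k = 0 and j(k) = 1 if 1 ≤ k ≤ s−1. Then the following three quantities are equal: Σ_{n=0}^{∞} aⁿ bⁿ q^{n²} / ((aq; q)_n (bq; q)_n) = Σ_{k=0}^{s−1} Σ_{n=0}^{∞} a^{sn+k} b^{n+j(k)} q^{(sn+k)(n+j(k))} / ((aq; q)_n (bq; q)_{sn+k}) = 1 + b Σ_{n=1}^{∞} aⁿ qⁿ / (bq; q)_n. -/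
open Finset Filter

lemma qPoch_zero (A q : ℂ) : qPoch A q 0 = 1 := Finset.prod_range_zero _

lemma qPoch_succ (A q : ℂ) (n : ℕ) : qPoch A q (n+1) = qPoch A q n * (1 - A * q ^ n) :=
  Finset.prod_range_succ _ _

/-- The complex absolute value, as an absolute value given by the norm. -/
noncomputable def Complex.abs : AbsoluteValue ℂ ℝ where
  toFun x := ‖x‖
  map_mul' := norm_mul
  nonneg' := norm_nonneg
  eq_zero' _ := norm_eq_zero
  add_le' := norm_add_le

lemma Complex.norm_eq_abs (z : ℂ) : ‖z‖ = Complex.abs z := rfl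

lemma qPoch_bq_succ (b q : ℂ) (M : ℕ) :
    qPoch (b*q) q (M+1) = qPoch (b*q) q M * (1 - b * q ^ (M+1)) := by
  rw [qPoch_succ]; congr 1; rw [pow_succ']; ring

noncomputable def midT (s : ℕ) (q a b : ℂ) (k n : ℕ) : ℂ :=
  a ^ (s * n + k) * b ^ (n + if k = 0 then 0 else 1) *
    q ^ ((s * n + k) * (n + if k = 0 then 0 else 1)) /
    (qPoch (a * q) q n * qPoch (b * q) q (s * n + k))

noncomputable def tailT (s : ℕ) (q a b : ℂ) (n : ℕ) : ℂ :=
  ∑' m : ℕ, a ^ (m + s*n) * q ^ (n * (m + s*n)) / qPoch (b*q) q (m + s*n)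

noncomputable def DT (s : ℕ) (q a b : ℂ) (t : ℕ) : ℂ :=
  b ^ (t+1) / qPoch (a*q) q t * tailT s q a b (t+1)

/-- Weierstrass product inequality. -/
lemma weierstrass (x : ℕ → ℝ) (h0 : ∀ i, 0 ≤ x i) (h1 : ∀ i, x i ≤ 1) (n : ℕ) :
    1 - ∑ i ∈ range n, x i ≤ ∏ i ∈ range n, (1 - x i) := by
  induction n with
  | zero => simp
  | succ n ih =>
    rw [Finset.prod_range_succ, Finset.sum_range_succ]
    have hx : 0 ≤ 1 - x n := by linarith [h1 n]
    have hs : 0 ≤ ∑ i ∈ range n, x i := Finset.sum_nonneg fun i _ => h0 i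
    nlinarith [mul_le_mul_of_nonneg_right ih hx, mul_nonneg hs (h0 n)]

/-- Uniform lower bound for the q-Pochhammer symbols. -/
lemma qPoch_lower (c q : ℂ) (hc : Complex.abs c < 1) (hq : Complex.abs q < 1) :
    ∃ δ : ℝ, 0 < δ ∧ ∀ n, δ ≤ Complex.abs (qPoch c q n) := by
  set r := Complex.abs c with hr
  set t := Complex.abs q with ht
  have hr0 : 0 ≤ r := Complex.abs.nonneg c
  have ht0 : 0 ≤ t := Complex.abs.nonneg q
  obtain ⟨N, hN⟩ : ∃ N, r * t ^ N ≤ (1 - t) / 2 := by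
    have h2 : Tendsto (fun N : ℕ => r * t ^ N) atTop (nhds (r * 0)) :=
      (tendsto_pow_atTop_nhds_zero_of_lt_one ht0 hq).const_mul r
    rw [mul_zero] at h2
    exact (h2.eventually_le_const (by linarith : (0:ℝ) < (1 - t)/2)).exists
  have hfac : ∀ i : ℕ, 0 < 1 - r * t ^ i := by
    intro i
    have : r * t ^ i ≤ r * 1 :=
      mul_le_mul_of_nonneg_left (pow_le_one₀ ht0 hq.le) hr0
    nlinarith
  have hfac1 : ∀ i : ℕ, 1 - r * t ^ i ≤ 1 := by
    intro i; have := mul_nonneg hr0 (pow_nonneg ht0 i); linarith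
  have habs : ∀ n, ∏ i ∈ range n, (1 - r * t ^ i) ≤ Complex.abs (qPoch c q n) := by
    intro n
    rw [qPoch, map_prod]
    apply Finset.prod_le_prod (fun i _ => (hfac i).le)
    intro i _
    have h1 : Complex.abs 1 ≤ Complex.abs (1 - c * q ^ i) + Complex.abs (c * q ^ i) := by
      calc Complex.abs 1 = Complex.abs ((1 - c * q ^ i) + c * q ^ i) := by ring_nf
        _ ≤ _ := Complex.abs.add_le _ _
    have h2 : Complex.abs (c * q ^ i) = r * t ^ i := by rw [map_mul, map_pow]
    simp only [map_one] at h1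
    linarith
  set c0 := ∏ i ∈ range N, (1 - r * t ^ i) with hc0
  have hc0pos : 0 < c0 := Finset.prod_pos fun i _ => hfac i
  refine ⟨c0 / 2, by positivity, fun n => ?_⟩
  refine le_trans ?_ (habs n)
  rcases le_or_gt n N with h | h
  · have h1 : c0 ≤ ∏ i ∈ range n, (1 - r * t ^ i) := by
      conv_lhs => rw [hc0, show N = n + (N - n) by omega, Finset.prod_range_add]
      exact mul_le_of_le_one_right (Finset.prod_pos fun i _ => hfac i).le
        (Finset.prod_le_one (fun i _ => (hfac _).le) (fun i _ => hfac1 _))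
    linarith
  · -- n > N : split and use Weierstrass on the tail
    have hsplit : ∏ i ∈ range n, (1 - r * t ^ i)
        = c0 * ∏ i ∈ range (n - N), (1 - r * t ^ (N + i)) := by
      rw [hc0, ← Finset.prod_range_add, show N + (n - N) = n by omega]
    rw [hsplit]
    have htail : (1:ℝ)/2 ≤ ∏ i ∈ range (n - N), (1 - r * t ^ (N + i)) := by
      have hw := weierstrass (fun i => r * t ^ (N + i))
        (fun i => mul_nonneg hr0 (pow_nonneg ht0 _))
        (fun i => by
          show r * t ^ (N + i) ≤ 1
          have : r * t ^ (N + i) ≤ r * 1 :=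
            mul_le_mul_of_nonneg_left (pow_le_one₀ ht0 hq.le) hr0
          nlinarith) (n - N)
      have hsum : ∑ i ∈ range (n - N), r * t ^ (N + i) ≤ 1/2 := by
        have e1 : ∀ i : ℕ, r * t ^ (N + i) = (r * t ^ N) * t ^ i := by
          intro i; rw [pow_add]; ring
        simp only [e1]
        rw [← Finset.mul_sum]
        have hgeo : ∑ i ∈ range (n - N), t ^ i ≤ 1 / (1 - t) := by
          have hhs := hasSum_geometric_of_lt_one ht0 hq
          have h1 := Summable.sum_le_tsum (range (n - N)) (fun i _ => pow_nonneg ht0 i) hhs.summable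
          rw [hhs.tsum_eq] at h1
          rw [one_div]
          exact h1
        calc (r * t ^ N) * ∑ i ∈ range (n - N), t ^ i
            ≤ ((1 - t)/2) * (1/(1-t)) := by
              apply mul_le_mul hN hgeo (Finset.sum_nonneg fun i _ => pow_nonneg ht0 i) (by linarith)
          _ = 1/2 := by
              have h1t : (1:ℝ) - t ≠ 0 := by intro h0; rw [sub_eq_zero] at h0; exact absurd h0.symm hq.ne
              field_simp
      linarith
    calc c0/2 = c0 * (1/2) := by ring
      _ ≤ c0 * ∏ i ∈ range (n - N), (1 - r * t ^ (N + i)) :=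
          mul_le_mul_of_nonneg_left htail hc0pos.le


/-- summability of the tail series `m ↦ a^{m+K} q^{n(m+K)} / (bq;q)_{m+K}` for `n ≥ 1`. -/
lemma summable_tail (q a b : ℂ) (δb : ℝ) (hδb : 0 < δb)
    (hPb : ∀ n, δb ≤ Complex.abs (qPoch (b*q) q n))
    (haq : Complex.abs (a * q) < 1) (hq1 : Complex.abs q < 1)
    (n K : ℕ) (hn : 1 ≤ n) :
    Summable (fun m : ℕ => a ^ (m+K) * q ^ (n*(m+K)) / qPoch (b*q) q (m+K)) := by
  have hα0 : 0 ≤ Complex.abs (a*q) := Complex.abs.nonneg _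
  apply Summable.of_norm_bounded (g := fun m => (Complex.abs (a*q) ^ K / δb) * Complex.abs (a*q) ^ m)
  · exact (summable_geometric_of_lt_one hα0 haq).mul_left _
  · intro m
    have hden := hPb (m+K)
    have hQne : qPoch (b*q) q (m+K) ≠ 0 := by
      intro h0; rw [h0] at hden; simp at hden; linarith
    rw [norm_div, Complex.norm_eq_abs, Complex.norm_eq_abs]
    have hnum : Complex.abs (a ^ (m+K) * q ^ (n*(m+K))) ≤ Complex.abs (a*q) ^ (m+K) := by
      rw [map_mul, map_pow, map_pow, map_mul]
      have h1 : Complex.abs q ^ (n*(m+K)) ≤ Complex.abs q ^ (m+K) :=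
        pow_le_pow_of_le_one (Complex.abs.nonneg q) hq1.le
          (Nat.le_mul_of_pos_left _ hn)
      calc Complex.abs a ^ (m+K) * Complex.abs q ^ (n*(m+K))
          ≤ Complex.abs a ^ (m+K) * Complex.abs q ^ (m+K) := by
            apply mul_le_mul_of_nonneg_left h1 (pow_nonneg (Complex.abs.nonneg a) _)
        _ = (Complex.abs a * Complex.abs q) ^ (m+K) := (mul_pow _ _ _).symm
    calc Complex.abs (a ^ (m+K) * q ^ (n*(m+K))) / Complex.abs (qPoch (b*q) q (m+K))
        ≤ Complex.abs (a*q) ^ (m+K) / δb := by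
          apply div_le_div₀ (pow_nonneg hα0 _) hnum hδb hden
      _ = Complex.abs (a*q) ^ K / δb * Complex.abs (a*q) ^ m := by
          rw [pow_add]; ring


lemma pow_bound (u v t : ℝ) (hu : 0 ≤ u) (hv : 0 ≤ v) (ht : 0 ≤ t) (ht1 : t ≤ 1)
    (hut : u * t ≤ 1) (hvt : v * t ≤ 1) (x y : ℕ) (hxy : x + y ≤ x * y) :
    u ^ x * v ^ y * t ^ (x*y) ≤ (u*t) ^ x := by
  have h1 : t ^ (x*y) ≤ t ^ (x+y) := pow_le_pow_of_le_one ht ht1 hxy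
  calc u ^ x * v ^ y * t ^ (x*y) ≤ u ^ x * v ^ y * t ^ (x+y) := by
        apply mul_le_mul_of_nonneg_left h1 (by positivity)
    _ = (u*t) ^ x * (v*t) ^ y := by rw [pow_add, mul_pow, mul_pow]; ring
    _ ≤ (u*t) ^ x * 1 := by
        apply mul_le_mul_of_nonneg_left (pow_le_one₀ (by positivity) hvt) (by positivity)
    _ = (u*t) ^ x := mul_one _

lemma summable_mid (s' : ℕ) (q a b : ℂ) (δa δb : ℝ) (hδa : 0 < δa) (hδb : 0 < δb)
    (hPa : ∀ n, δa ≤ Complex.abs (qPoch (a*q) q n))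
    (hPb : ∀ n, δb ≤ Complex.abs (qPoch (b*q) q n))
    (hq1 : Complex.abs q < 1) (haq : Complex.abs (a*q) < 1) (hbq : Complex.abs (b*q) < 1)
    (k : ℕ) : Summable (fun n => midT (s'+1) q a b k n) := by
  set s := s'+1 with hsdef
  rw [← summable_nat_add_iff 2]
  have hα0 : 0 ≤ Complex.abs (a*q) := Complex.abs.nonneg _
  apply Summable.of_norm_bounded
    (g := fun n => (Complex.abs (a*q) ^ 2 / (δa * δb)) * Complex.abs (a*q) ^ n)
  · exact (summable_geometric_of_lt_one hα0 haq).mul_left _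
  · intro n
    set x := s * (n+2) + k with hx
    set y := (n+2) + (if k = 0 then 0 else 1) with hy
    have hxn : n + 2 ≤ x := by
      have h1 : n + 2 ≤ s * (n+2) := Nat.le_mul_of_pos_left _ (by omega)
      exact le_trans h1 (Nat.le_add_right _ _)
    have hx2 : 2 ≤ x := le_trans (by omega) hxn
    have hy2 : 2 ≤ y := by
      rcases Nat.eq_zero_or_pos k with h | h <;> simp [hy, h] <;> omega
    have hxy : x + y ≤ x * y := Nat.add_le_mul hx2 hy2
    have hPan := hPa (n+2); have hPbn := hPb x
    have hPane : qPoch (a*q) q (n+2) ≠ 0 := by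
      intro h0; rw [h0] at hPan; simp at hPan; linarith
    have hPbne : qPoch (b*q) q x ≠ 0 := by
      intro h0; rw [h0] at hPbn; simp at hPbn; linarith
    rw [midT]
    rw [norm_div, Complex.norm_eq_abs, Complex.norm_eq_abs]
    have hnum : Complex.abs (a ^ x * b ^ y * q ^ (x*y)) ≤ Complex.abs (a*q) ^ (n+2) := by
      rw [map_mul, map_mul, map_pow, map_pow, map_pow]
      have h1 : Complex.abs a ^ x * Complex.abs b ^ y * Complex.abs q ^ (x*y)
          ≤ (Complex.abs a * Complex.abs q) ^ x := by
        apply pow_bound _ _ _ (Complex.abs.nonneg a) (Complex.abs.nonneg b)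
          (Complex.abs.nonneg q) hq1.le _ _ _ _ hxy
        · rw [← map_mul]; exact haq.le
        · rw [← map_mul]; exact hbq.le
      have h2 : Complex.abs (a*q) ^ x ≤ Complex.abs (a*q) ^ (n+2) :=
        pow_le_pow_of_le_one hα0 haq.le hxn
      rw [← map_mul] at h1
      exact h1.trans h2
    have hden : δa * δb ≤ Complex.abs (qPoch (a*q) q (n+2) * qPoch (b*q) q x) := by
      rw [map_mul]
      exact mul_le_mul hPan hPbn hδb.le (Complex.abs.nonneg _)
    calc Complex.abs (a ^ x * b ^ y * q ^ (x*y)) / Complex.abs (qPoch (a*q) q (n+2) * qPoch (b*q) q x)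
        ≤ Complex.abs (a*q) ^ (n+2) / (δa * δb) := by
          apply div_le_div₀ (pow_nonneg hα0 _) hnum (by positivity) hden
      _ = Complex.abs (a*q) ^ 2 / (δa * δb) * Complex.abs (a*q) ^ n := by
          rw [pow_add]; ring


lemma key_step (s' : ℕ) (q a b : ℂ) (δa δb : ℝ) (hδa : 0 < δa) (hδb : 0 < δb)
    (hPa : ∀ n, δa ≤ Complex.abs (qPoch (a*q) q n))
    (hPb : ∀ n, δb ≤ Complex.abs (qPoch (b*q) q n))
    (hq1 : Complex.abs q < 1) (haq : Complex.abs (a*q) < 1) (hbq : Complex.abs (b*q) < 1)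
    (t : ℕ) :
    DT (s'+1) q a b t
      = (∑ k ∈ range (s'+1), midT (s'+1) q a b k (t+1)) + DT (s'+1) q a b (t+1) := by
  have hQne : ∀ M, qPoch (b*q) q M ≠ 0 := by
    intro M h0; have := hPb M; rw [h0] at this; simp at this; linarith
  have hPane : ∀ M, qPoch (a*q) q M ≠ 0 := by
    intro M h0; have := hPa M; rw [h0] at this; simp at this; linarith
  have h1aq : (1:ℂ) - a * q^(t+1) ≠ 0 := by
    intro h0
    have he : a * q^(t+1) = 1 := by linear_combination -h0
    have habs := congrArg Complex.abs he
    rw [map_one] at habs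
    have h2 : Complex.abs (a*q^(t+1)) ≤ Complex.abs (a*q) := by
      have he2 : a * q^(t+1) = (a*q) * q^t := by ring
      rw [he2, map_mul]
      calc Complex.abs (a*q) * Complex.abs (q^t) ≤ Complex.abs (a*q) * 1 := by
            apply mul_le_mul_of_nonneg_left _ (Complex.abs.nonneg _)
            rw [map_pow]; exact pow_le_one₀ (Complex.abs.nonneg q) hq1.le
        _ = _ := mul_one _
    rw [habs] at h2
    linarith
  set f : ℕ → ℂ := fun m => a ^ (m + (s'+1)*(t+1)) * q ^ ((t+1) * (m + (s'+1)*(t+1)))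
      / qPoch (b*q) q (m + (s'+1)*(t+1)) with hf
  have hsumf : Summable f := summable_tail q a b δb hδb hPb haq hq1 (t+1) ((s'+1)*(t+1)) (by omega)
  set g : ℕ → ℂ := fun m => a ^ (m + (1 + (s'+1)*(t+1))) * q ^ ((t+2) * (m + (1 + (s'+1)*(t+1))))
      / qPoch (b*q) q (m + (1 + (s'+1)*(t+1))) with hg
  have hsumg : Summable g := summable_tail q a b δb hδb hPb haq hq1 (t+2) (1 + (s'+1)*(t+1)) (by omega)
  -- Step A
  have hA : (1 - a * q^(t+1)) * tailT (s'+1) q a b (t+1) = f 0 + b * ∑' m, g m := by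
    have h1 : tailT (s'+1) q a b (t+1) = ∑' m, f m := rfl
    have h2 : Summable (fun m => f (m+1)) := (summable_nat_add_iff 1).2 hsumf
    have h3 : Summable (fun m => (a*q^(t+1)) * f m) := hsumf.mul_left _
    rw [h1, sub_mul, one_mul, ← tsum_mul_left, Summable.tsum_eq_zero_add hsumf, add_sub_assoc,
      ← Summable.tsum_sub h2 h3, ← tsum_mul_left]
    congr 1
    apply tsum_congr
    intro m
    simp only [hf, hg]
    have hidx1 : m + 1 + (s'+1)*(t+1) = (m + (s'+1)*(t+1)) + 1 := by omega
    have hidx2 : m + (1 + (s'+1)*(t+1)) = (m + (s'+1)*(t+1)) + 1 := by omega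
    rw [hidx1, hidx2, qPoch_bq_succ]
    have h1b : (1:ℂ) - b * q ^ (m + (s'+1)*(t+1) + 1) ≠ 0 := by
      have := hQne (m + (s'+1)*(t+1) + 1)
      rw [qPoch_bq_succ] at this
      exact right_ne_zero_of_mul this
    field_simp [hQne (m + (s'+1)*(t+1))]
    ring
  -- Step B
  have hB : ∑' m, g m = (∑ i ∈ range s', g i) + tailT (s'+1) q a b (t+2) := by
    rw [← Summable.sum_add_tsum_nat_add s' hsumg]
    congr 1
    apply tsum_congr
    intro m
    simp only [hg]
    rw [show m + s' + (1 + (s'+1)*(t+1)) = m + (s'+1)*(t+2) by ring]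
  -- Step C
  have hC : DT (s'+1) q a b t
      = b^(t+1) / qPoch (a*q) q (t+1) * ((1 - a*q^(t+1)) * tailT (s'+1) q a b (t+1)) := by
    simp only [DT]
    rw [qPoch_bq_succ a q t]
    field_simp [hPane t, h1aq]
  rw [hC, hA, hB]
  rw [Finset.sum_range_succ']
  have hmid0 : midT (s'+1) q a b 0 (t+1) = b^(t+1) / qPoch (a*q) q (t+1) * f 0 := by
    simp only [midT, hf, if_pos, add_zero, zero_add]
    field_simp [hPane (t+1), hQne ((s'+1)*(t+1))]
    ring
  have hmidk : ∀ i ∈ range s', midT (s'+1) q a b (i+1) (t+1)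
      = b^(t+1) / qPoch (a*q) q (t+1) * (b * g i) := by
    intro i _
    simp only [midT, hg, Nat.add_one_ne_zero, if_false]
    rw [show i + (1 + (s'+1)*(t+1)) = (s'+1)*(t+1) + (i+1) by ring]
    field_simp [hPane (t+1), hQne ((s'+1)*(t+1) + (i+1))]
    ring
  rw [Finset.sum_congr rfl hmidk, hmid0]
  have hDT : DT (s'+1) q a b (t+1) = b^(t+2) / qPoch (a*q) q (t+1) * tailT (s'+1) q a b (t+2) := rfl
  rw [hDT, ← Finset.mul_sum, ← Finset.mul_sum]
  ring


/-- base case -/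
lemma base_case (s' : ℕ) (q a b : ℂ) (δb : ℝ) (hδb : 0 < δb)
    (hPb : ∀ n, δb ≤ Complex.abs (qPoch (b*q) q n))
    (hq1 : Complex.abs q < 1) (haq : Complex.abs (a*q) < 1) :
    1 + b * (∑' n : ℕ, a ^ (n + 1) * q ^ (n + 1) / qPoch (b * q) q (n + 1))
      = (∑ k ∈ range (s'+1), midT (s'+1) q a b k 0) + DT (s'+1) q a b 0 := by
  set v : ℕ → ℂ := fun m => a ^ (m+1) * q ^ (m+1) / qPoch (b*q) q (m+1) with hv
  have hsumv : Summable v := by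
    have := summable_tail q a b δb hδb hPb haq hq1 1 1 le_rfl
    apply this.congr
    intro m
    simp only [hv, one_mul]
  have hsplit : ∑' m, v m = (∑ i ∈ range s', v i) + ∑' m, v (m + s') :=
    (Summable.sum_add_tsum_nat_add s' hsumv).symm
  have htail : ∑' m, v (m + s') = tailT (s'+1) q a b 1 := by
    apply tsum_congr
    intro m
    simp only [hv, tailT]
    rw [show m + s' + 1 = m + (s'+1)*1 by ring, one_mul]
  have hDT0 : DT (s'+1) q a b 0 = b * tailT (s'+1) q a b 1 := by
    simp only [DT, qPoch_zero, zero_add, pow_one, div_one]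
  have hmid0 : midT (s'+1) q a b 0 0 = 1 := by
    simp [midT, qPoch_zero]
  have hmidk : ∀ i ∈ range s', midT (s'+1) q a b (i+1) 0 = b * v i := by
    intro i _
    simp only [midT, hv, Nat.add_one_ne_zero, if_false, mul_zero, zero_add, pow_one,
      qPoch_zero, one_mul, mul_one]
    ring
  rw [Finset.sum_range_succ', Finset.sum_congr rfl hmidk, hmid0, hDT0, hsplit, htail,
    ← Finset.mul_sum]
  ring

lemma partial_sums (s' : ℕ) (q a b : ℂ) (δa δb : ℝ) (hδa : 0 < δa) (hδb : 0 < δb)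
    (hPa : ∀ n, δa ≤ Complex.abs (qPoch (a*q) q n))
    (hPb : ∀ n, δb ≤ Complex.abs (qPoch (b*q) q n))
    (hq1 : Complex.abs q < 1) (haq : Complex.abs (a*q) < 1) (hbq : Complex.abs (b*q) < 1)
    (t : ℕ) :
    1 + b * (∑' n : ℕ, a ^ (n + 1) * q ^ (n + 1) / qPoch (b * q) q (n + 1))
      = (∑ n ∈ range (t+1), ∑ k ∈ range (s'+1), midT (s'+1) q a b k n) + DT (s'+1) q a b t := by
  induction t with
  | zero =>
    rw [Finset.sum_range_one]
    exact base_case s' q a b δb hδb hPb hq1 haq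
  | succ t ih =>
    rw [ih, Finset.sum_range_succ _ (t+1),
      key_step s' q a b δa δb hδa hδb hPa hPb hq1 haq hbq t]
    ring


lemma DT_tendsto (s' : ℕ) (q a b : ℂ) (δa δb : ℝ) (hδa : 0 < δa) (hδb : 0 < δb)
    (hPa : ∀ n, δa ≤ Complex.abs (qPoch (a*q) q n))
    (hPb : ∀ n, δb ≤ Complex.abs (qPoch (b*q) q n))
    (hq1 : Complex.abs q < 1) (haq : Complex.abs (a*q) < 1) (hbq : Complex.abs (b*q) < 1) :
    Tendsto (DT (s'+1) q a b) atTop (nhds 0) := by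
  set α := Complex.abs (a*q) with hα
  set β := Complex.abs (b*q) with hβ
  set tq := Complex.abs q with htq
  have hα0 : 0 ≤ α := Complex.abs.nonneg _
  have hβ0 : 0 ≤ β := Complex.abs.nonneg _
  have htq0 : 0 ≤ tq := Complex.abs.nonneg _
  have h1α : 0 < 1 - α := by linarith
  set K := 1 / (δa * δb * (1 - α)) with hK
  have hK0 : 0 ≤ K := by positivity
  apply squeeze_zero_norm' (a := fun t => K * β ^ (t+1))
  · filter_upwards [eventually_ge_atTop 1] with t ht
    -- bound tail
    have htail : ‖tailT (s'+1) q a b (t+1)‖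
        ≤ (tq ^ (t+1) * α ^ ((s'+1)*(t+1)) / δb) * (1-α)⁻¹ := by
      set c := tq ^ (t+1) * α ^ ((s'+1)*(t+1)) / δb with hc
      have hgeom : HasSum (fun m : ℕ => c * α ^ m) (c * (1-α)⁻¹) :=
        (hasSum_geometric_of_lt_one hα0 haq).mul_left c
      apply tsum_of_norm_bounded hgeom
      intro m
      set M := m + (s'+1)*(t+1) with hM
      have hMt : t + 1 ≤ M := by
        have h1 : t + 1 ≤ (s'+1)*(t+1) := Nat.le_mul_of_pos_left _ (by omega)
        omega
      have hexp : M + (t+1) ≤ (t+1) * M := by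
        have h2 : t + 1 ≤ t * M := by
          calc t + 1 ≤ t * (t+1) := by nlinarith
            _ ≤ t * M := Nat.mul_le_mul_left t hMt
        calc M + (t+1) ≤ M + t * M := by omega
          _ = (t+1) * M := by ring
      rw [norm_div, Complex.norm_eq_abs, Complex.norm_eq_abs, map_mul, map_pow, map_pow]
      have hnum : Complex.abs a ^ M * tq ^ ((t+1) * M) ≤ α ^ M * tq ^ (t+1) := by
        calc Complex.abs a ^ M * tq ^ ((t+1)*M)
            ≤ Complex.abs a ^ M * tq ^ (M + (t+1)) := by
              apply mul_le_mul_of_nonneg_left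
                (pow_le_pow_of_le_one htq0 hq1.le hexp)
                (pow_nonneg (Complex.abs.nonneg a) _)
          _ = (Complex.abs a * tq) ^ M * tq ^ (t+1) := by
              rw [pow_add, mul_pow]; ring
          _ = α ^ M * tq ^ (t+1) := by rw [hα, map_mul, htq]
      calc Complex.abs a ^ M * tq ^ ((t+1)*M) / Complex.abs (qPoch (b*q) q M)
          ≤ (α ^ M * tq ^ (t+1)) / δb := by
            apply div_le_div₀ (by positivity) hnum hδb (hPb M)
        _ = c * α ^ m := by
            rw [hc, hM, pow_add]; ring
    have hDTbound : ‖DT (s'+1) q a b t‖ ≤ K * β ^ (t+1) := by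
      have e1 : ‖DT (s'+1) q a b t‖
          = Complex.abs b ^ (t+1) / Complex.abs (qPoch (a*q) q t) * ‖tailT (s'+1) q a b (t+1)‖ := by
        simp only [DT, norm_mul, norm_div, norm_pow, Complex.norm_eq_abs]
      rw [e1]
      have h2 : Complex.abs b ^ (t+1) / Complex.abs (qPoch (a*q) q t)
          ≤ Complex.abs b ^ (t+1) / δa := by
        apply div_le_div_of_nonneg_left (by positivity) hδa (hPa t)
      calc Complex.abs b ^ (t+1) / Complex.abs (qPoch (a*q) q t) * ‖tailT (s'+1) q a b (t+1)‖
          ≤ (Complex.abs b ^ (t+1) / δa) * ((tq ^ (t+1) * α ^ ((s'+1)*(t+1)) / δb) * (1-α)⁻¹) := by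
            apply mul_le_mul h2 htail (norm_nonneg _) (by positivity)
        _ = (β ^ (t+1) * α ^ ((s'+1)*(t+1))) * K := by
            rw [hβ, map_mul, hK]
            field_simp
            ring
        _ ≤ (β ^ (t+1) * 1) * K := by
            apply mul_le_mul_of_nonneg_right _ hK0
            apply mul_le_mul_of_nonneg_left
              (pow_le_one₀ hα0 haq.le) (by positivity)
        _ = K * β ^ (t+1) := by ring
    exact hDTbound
  · have h := (tendsto_pow_atTop_nhds_zero_of_lt_one hβ0 hbq).const_mul (K*β)
    rw [mul_zero] at h
    exact h.congr fun t => by rw [pow_succ]; ring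

lemma main_identity (s : ℕ) (hs : 0 < s) (q a b : ℂ)
    (hq1 : Complex.abs q < 1) (haq : Complex.abs (a * q) < 1)
    (hbq : Complex.abs (b * q) < 1) :
    (∑ k ∈ Finset.range s, ∑' n : ℕ,
        a ^ (s * n + k) * b ^ (n + if k = 0 then 0 else 1) *
          q ^ ((s * n + k) * (n + if k = 0 then 0 else 1)) /
          (qPoch (a * q) q n * qPoch (b * q) q (s * n + k)))
      = 1 + b * ∑' n : ℕ, a ^ (n + 1) * q ^ (n + 1) / qPoch (b * q) q (n + 1) := by
  obtain ⟨s', rfl⟩ : ∃ s', s = s' + 1 := ⟨s - 1, by omega⟩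
  obtain ⟨δa, hδa, hPa⟩ := qPoch_lower (a*q) q haq hq1
  obtain ⟨δb, hδb, hPb⟩ := qPoch_lower (b*q) q hbq hq1
  have hfold : (∑ k ∈ Finset.range (s'+1), ∑' n : ℕ,
        a ^ ((s'+1) * n + k) * b ^ (n + if k = 0 then 0 else 1) *
          q ^ (((s'+1) * n + k) * (n + if k = 0 then 0 else 1)) /
          (qPoch (a * q) q n * qPoch (b * q) q ((s'+1) * n + k)))
      = ∑ k ∈ Finset.range (s'+1), ∑' n : ℕ, midT (s'+1) q a b k n := rfl
  rw [hfold]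
  have hsumk : ∀ k ∈ Finset.range (s'+1), Summable (fun n => midT (s'+1) q a b k n) :=
    fun k _ => summable_mid s' q a b δa δb hδa hδb hPa hPb hq1 haq hbq k
  rw [← Summable.tsum_finsetSum hsumk]
  set S : ℕ → ℂ := fun n => ∑ k ∈ Finset.range (s'+1), midT (s'+1) q a b k n with hS
  have hsumS : Summable S := summable_sum hsumk
  have h1 : Tendsto (fun t => ∑ n ∈ Finset.range t, S n) atTop (nhds (∑' n, S n)) :=
    hsumS.hasSum.tendsto_sum_nat
  have h2 : Tendsto (fun t => ∑ n ∈ Finset.range (t+1), S n) atTop (nhds (∑' n, S n)) :=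
    h1.comp (tendsto_add_atTop_nat 1)
  have h3 : Tendsto (fun t => ∑ n ∈ Finset.range (t+1), S n) atTop
      (nhds (1 + b * ∑' n : ℕ, a ^ (n + 1) * q ^ (n + 1) / qPoch (b * q) q (n + 1))) := by
    have h4 : (fun t => ∑ n ∈ Finset.range (t+1), S n)
        = fun t => (1 + b * ∑' n : ℕ, a ^ (n + 1) * q ^ (n + 1) / qPoch (b * q) q (n + 1))
            - DT (s'+1) q a b t := by
      funext t
      have h5 := partial_sums s' q a b δa δb hδa hδb hPa hPb hq1 haq hbq t
      rw [h5]
      ring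
    rw [h4]
    have h6 := (tendsto_const_nhds
      (x := 1 + b * ∑' n : ℕ, a ^ (n + 1) * q ^ (n + 1) / qPoch (b * q) q (n + 1))
      (f := atTop (α := ℕ))).sub
      (DT_tendsto s' q a b δa δb hδa hδb hPa hPb hq1 haq hbq)
    simpa using h6
  exact tendsto_nhds_unique h2 h3

/-- Theorem 3.1: the Durfee rectangle dissection identity; the three displayed
quantities are equal. -/
theorem durfee_rectangle_identity (s : ℕ) (hs : 0 < s) (q a b : ℂ)
    (hq1 : ‖q‖ < 1) (haq : ‖a * q‖ < 1)
    (hbq : ‖b * q‖ < 1) :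
    (∑' n : ℕ, a ^ n * b ^ n * q ^ (n ^ 2) / (qPoch (a * q) q n * qPoch (b * q) q n)
      = ∑ k ∈ Finset.range s, ∑' n : ℕ,
          a ^ (s * n + k) * b ^ (n + if k = 0 then 0 else 1) *
            q ^ ((s * n + k) * (n + if k = 0 then 0 else 1)) /
            (qPoch (a * q) q n * qPoch (b * q) q (s * n + k)))
    ∧ (∑ k ∈ Finset.range s, ∑' n : ℕ,
          a ^ (s * n + k) * b ^ (n + if k = 0 then 0 else 1) *
            q ^ ((s * n + k) * (n + if k = 0 then 0 else 1)) /
            (qPoch (a * q) q n * qPoch (b * q) q (s * n + k))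
      = 1 + b * ∑' n : ℕ, a ^ (n + 1) * q ^ (n + 1) / qPoch (b * q) q (n + 1)) := by
  have hms := main_identity s hs q a b hq1 haq hbq
  have hm1 := main_identity 1 one_pos q a b hq1 haq hbq
  have e1 : (∑' n : ℕ, a ^ n * b ^ n * q ^ (n ^ 2) / (qPoch (a * q) q n * qPoch (b * q) q n))
      = ∑ k ∈ Finset.range 1, ∑' n : ℕ,
          a ^ (1 * n + k) * b ^ (n + if k = 0 then 0 else 1) *
            q ^ ((1 * n + k) * (n + if k = 0 then 0 else 1)) /
            (qPoch (a * q) q n * qPoch (b * q) q (1 * n + k)) := by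
    rw [Finset.sum_range_one]
    apply tsum_congr
    intro n
    simp [pow_two]
  exact ⟨(e1.trans hm1).trans hms.symm, hms⟩
end

section
/- Let q be a complex number with 0 < |q| < 1 and let a be a nonzero complex number. Then (stated with q replaced by q⁴ so that all exponents are integers): (Σ_{n=0}^{∞} aⁿ q^{(n+1)²} / (q⁴; q⁴)_n) · (Σ_{n=0}^{∞} (−a)ⁿ q^{n²} / (q⁴; q⁴)_n) + (Σ_{n=0}^{∞} (−a)ⁿ q^{(n+1)²} / (q⁴; q⁴)_n) · (Σ_{n=0}^{∞} aⁿ q^{n²} / (q⁴; q⁴)_n) = 2q. -/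
open Filter Topology


namespace Sec6
variable {q : ℂ}

noncomputable def F (q b : ℂ) : ℂ := ∑' n : ℕ, b ^ n * q ^ (n ^ 2) / qPoch (q^4) (q^4) n

lemma factor_ne (hq : ‖q‖ < 1) (i : ℕ) : (1 : ℂ) - q^4 * (q^4) ^ i ≠ 0 := by
  intro h
  have h1 : q^4 * (q^4)^i = 1 := by linear_combination -h
  have h2 : ‖q^4 * (q^4)^i‖ < 1 := by
    simp only [norm_mul, norm_pow]
    have h4 : ‖q‖^4 < 1 := pow_lt_one₀ (norm_nonneg q) hq (by norm_num)
    have h5 : (‖q‖^4)^i ≤ 1 := pow_le_one₀ (by positivity) h4.le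
    nlinarith [mul_le_mul_of_nonneg_left h5 (pow_nonneg (norm_nonneg q) 4)]
  rw [h1] at h2; simp at h2

lemma qPoch_ne (hq : ‖q‖ < 1) (n : ℕ) : qPoch (q^4) (q^4) n ≠ 0 :=
  Finset.prod_ne_zero_iff.mpr fun i _ => factor_ne hq i

lemma qPoch_succ (A Q : ℂ) (n : ℕ) : qPoch A Q (n+1) = qPoch A Q n * (1 - A * Q ^ n) :=
  Finset.prod_range_succ _ n

lemma term_succ (hq : ‖q‖ < 1) (b : ℂ) (n : ℕ) :
    b ^ (n+1) * q ^ ((n+1) ^ 2) / qPoch (q^4) (q^4) (n+1)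
      = (b ^ n * q ^ (n ^ 2) / qPoch (q^4) (q^4) n) * (b * q ^ (2*n+1) / (1 - q^4 * (q^4)^n)) := by
  have e : q ^ ((n+1)^2) = q ^ (n^2) * q ^ (2*n+1) := by
    rw [← pow_add]; congr 1; ring
  rw [qPoch_succ, e]
  field_simp [qPoch_ne hq n, factor_ne hq n]
  ring

lemma summable_norm (hq : ‖q‖ < 1) (b : ℂ) :
    Summable (fun n : ℕ => ‖b ^ n * q ^ (n ^ 2) / qPoch (q^4) (q^4) n‖) := by
  apply summable_of_ratio_norm_eventually_le (show (1:ℝ)/2 < 1 by norm_num)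
  have hq2 : ‖q‖^2 < 1 := pow_lt_one₀ (norm_nonneg q) hq (by norm_num)
  have hq4 : ‖q‖^4 < 1 := pow_lt_one₀ (norm_nonneg q) hq (by norm_num)
  have t1 : Tendsto (fun n : ℕ => ‖b‖ * ‖q‖ * (‖q‖^2)^n) atTop (𝓝 0) := by
    simpa using (tendsto_pow_atTop_nhds_zero_of_lt_one (by positivity) hq2).const_mul (‖b‖ * ‖q‖)
  have t2 : Tendsto (fun n : ℕ => ‖q‖^4 * (‖q‖^4)^n) atTop (𝓝 0) := by
    simpa using (tendsto_pow_atTop_nhds_zero_of_lt_one (by positivity) hq4).const_mul (‖q‖^4)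
  filter_upwards [t1.eventually_lt_const (by norm_num : (0:ℝ) < 1/4),
    t2.eventually_lt_const (by norm_num : (0:ℝ) < 1/2)] with n h1 h2
  rw [Real.norm_of_nonneg (norm_nonneg _), Real.norm_of_nonneg (norm_nonneg _),
    term_succ hq b n, norm_mul]
  have hden : (1:ℝ)/2 ≤ ‖1 - q^4 * (q^4)^n‖ := by
    have := norm_sub_norm_le (1 : ℂ) (q^4 * (q^4)^n)
    simp only [norm_one, norm_mul, norm_pow] at this ⊢
    linarith
  have hnum : ‖b * q ^ (2*n+1)‖ ≤ 1/4 := by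
    rw [norm_mul, norm_pow]
    have : ‖q‖^(2*n+1) = ‖q‖ * (‖q‖^2)^n := by
      rw [← pow_mul, ← pow_succ']
    rw [this]
    nlinarith [norm_nonneg b, norm_nonneg q]
  have hfrac : ‖b * q ^ (2*n+1) / (1 - q^4 * (q^4)^n)‖ ≤ 1/2 := by
    rw [norm_div]
    calc ‖b * q ^ (2*n+1)‖ / ‖1 - q^4 * (q^4)^n‖ ≤ (1/4) / (1/2) :=
          div_le_div₀ (by norm_num) hnum (by norm_num) hden
      _ = 1/2 := by norm_num
  calc ‖b ^ n * q ^ (n ^ 2) / qPoch (q^4) (q^4) n‖ * ‖b * q ^ (2*n+1) / (1 - q^4 * (q^4)^n)‖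
      ≤ ‖b ^ n * q ^ (n ^ 2) / qPoch (q^4) (q^4) n‖ * (1/2) :=
        mul_le_mul_of_nonneg_left hfrac (norm_nonneg _)
    _ = 1/2 * ‖b ^ n * q ^ (n ^ 2) / qPoch (q^4) (q^4) n‖ := by ring

lemma funcEq (hq : ‖q‖ < 1) (b : ℂ) :
    F q b = F q (b * q^4) + b * q * F q (b * q^2) := by
  have hf := (summable_norm hq b).of_norm
  have hg := (summable_norm hq (b * q^4)).of_norm
  have hh := (summable_norm hq (b * q^2)).of_norm
  have hu : Summable (fun n : ℕ => b ^ n * q ^ (n ^ 2) / qPoch (q^4) (q^4) n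
      - (b*q^4) ^ n * q ^ (n ^ 2) / qPoch (q^4) (q^4) n) := hf.sub hg
  have key : F q b - F q (b * q^4)
      = ∑' n : ℕ, (b ^ n * q ^ (n ^ 2) / qPoch (q^4) (q^4) n
          - (b*q^4) ^ n * q ^ (n ^ 2) / qPoch (q^4) (q^4) n) := (Summable.tsum_sub hf hg).symm
  have hshift : ∀ n : ℕ, b ^ (n+1) * q ^ ((n+1) ^ 2) / qPoch (q^4) (q^4) (n+1)
      - (b*q^4) ^ (n+1) * q ^ ((n+1) ^ 2) / qPoch (q^4) (q^4) (n+1)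
      = b * q * ((b*q^2) ^ n * q ^ (n ^ 2) / qPoch (q^4) (q^4) n) := by
    intro n
    have e : q ^ ((n+1)^2) = q ^ (n^2) * (q ^ (2*n) * q) := by
      rw [show (n+1)^2 = n^2 + (2*n+1) by ring, pow_add]; ring
    rw [qPoch_succ, e, mul_pow, mul_pow]
    have e2 : (q^4 : ℂ) ^ (n+1) = q^4 * (q^4)^n := by rw [pow_succ]; ring
    field_simp [qPoch_ne hq n, factor_ne hq n]
    rw [e2]
    ring
  have key2 : ∑' n : ℕ, (b ^ n * q ^ (n ^ 2) / qPoch (q^4) (q^4) n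
          - (b*q^4) ^ n * q ^ (n ^ 2) / qPoch (q^4) (q^4) n)
      = b * q * F q (b * q^2) := by
    rw [Summable.tsum_eq_zero_add hu]
    simp only [hshift]
    rw [tsum_mul_left]
    simp [qPoch, F]
  rw [key2] at key
  linear_combination key

lemma bound (hq : ‖q‖ < 1) {b : ℂ} {r : ℝ} (hr : 0 < r) (hb : ‖b‖ ≤ r) :
    ‖F q b - 1‖ ≤ (‖b‖ / r) *
      ∑' n : ℕ, ‖(r:ℂ) ^ (n+1) * q ^ ((n+1) ^ 2) / qPoch (q^4) (q^4) (n+1)‖ := by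
  have hf := (summable_norm hq b).of_norm
  have h1 : F q b = 1 + ∑' n : ℕ, b ^ (n+1) * q ^ ((n+1) ^ 2) / qPoch (q^4) (q^4) (n+1) := by
    rw [F, Summable.tsum_eq_zero_add hf]
    simp [qPoch]
  have hsb : Summable (fun n : ℕ => ‖b ^ (n+1) * q ^ ((n+1) ^ 2) / qPoch (q^4) (q^4) (n+1)‖) :=
    (summable_norm hq b).comp_injective (add_left_injective 1)
  have hsr : Summable (fun n : ℕ => ‖(r:ℂ) ^ (n+1) * q ^ ((n+1) ^ 2) / qPoch (q^4) (q^4) (n+1)‖) :=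
    (summable_norm hq (r:ℂ)).comp_injective (add_left_injective 1)
  have hpt : ∀ n : ℕ, ‖b ^ (n+1) * q ^ ((n+1) ^ 2) / qPoch (q^4) (q^4) (n+1)‖
      ≤ (‖b‖ / r) * ‖(r:ℂ) ^ (n+1) * q ^ ((n+1) ^ 2) / qPoch (q^4) (q^4) (n+1)‖ := by
    intro n
    have hrn : ‖(r:ℂ)‖ = r := by
      rw [Complex.norm_real, Real.norm_of_nonneg hr.le]
    have hbp : ‖b‖ ^ (n+1) ≤ (‖b‖ / r) * r ^ (n+1) := by
      have : (‖b‖ / r) * r ^ (n+1) = ‖b‖ * r ^ n := by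
        field_simp; ring
      rw [this, pow_succ]
      calc ‖b‖ ^ n * ‖b‖ ≤ r ^ n * ‖b‖ :=
            mul_le_mul_of_nonneg_right (pow_le_pow_left₀ (norm_nonneg b) hb n) (norm_nonneg b)
        _ = ‖b‖ * r ^ n := by ring
    have W : (0:ℝ) ≤ ‖q ^ ((n+1) ^ 2)‖ / ‖qPoch (q^4) (q^4) (n+1)‖ := by positivity
    calc ‖b ^ (n+1) * q ^ ((n+1) ^ 2) / qPoch (q^4) (q^4) (n+1)‖
        = ‖b‖ ^ (n+1) * (‖q ^ ((n+1) ^ 2)‖ / ‖qPoch (q^4) (q^4) (n+1)‖) := by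
          rw [norm_div, norm_mul, norm_pow]; ring
      _ ≤ ((‖b‖ / r) * r ^ (n+1)) * (‖q ^ ((n+1) ^ 2)‖ / ‖qPoch (q^4) (q^4) (n+1)‖) :=
          mul_le_mul_of_nonneg_right hbp W
      _ = (‖b‖ / r) * ‖(r:ℂ) ^ (n+1) * q ^ ((n+1) ^ 2) / qPoch (q^4) (q^4) (n+1)‖ := by
          simp only [norm_div, norm_mul, norm_pow, hrn]; ring
  calc ‖F q b - 1‖ = ‖∑' n : ℕ, b ^ (n+1) * q ^ ((n+1) ^ 2) / qPoch (q^4) (q^4) (n+1)‖ := by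
        rw [h1]; congr 1; ring
    _ ≤ ∑' n : ℕ, ‖b ^ (n+1) * q ^ ((n+1) ^ 2) / qPoch (q^4) (q^4) (n+1)‖ :=
        norm_tsum_le_tsum_norm hsb
    _ ≤ ∑' n : ℕ, (‖b‖ / r) * ‖(r:ℂ) ^ (n+1) * q ^ ((n+1) ^ 2) / qPoch (q^4) (q^4) (n+1)‖ :=
        Summable.tsum_le_tsum hpt hsb (hsr.mul_left _)
    _ = (‖b‖ / r) * ∑' n : ℕ, ‖(r:ℂ) ^ (n+1) * q ^ ((n+1) ^ 2) / qPoch (q^4) (q^4) (n+1)‖ :=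
        tsum_mul_left


lemma tendsto_F (hq : ‖q‖ < 1) (c : ℂ) (hc : c ≠ 0) :
    Tendsto (fun k : ℕ => F q (c * (q^2)^k)) atTop (𝓝 1) := by
  rw [tendsto_iff_norm_sub_tendsto_zero]
  set C : ℝ := ∑' n : ℕ, ‖(‖c‖:ℂ) ^ (n+1) * q ^ ((n+1) ^ 2) / qPoch (q^4) (q^4) (n+1)‖ with hC
  have hcpos : 0 < ‖c‖ := norm_pos_iff.mpr hc
  have hb : ∀ k : ℕ, ‖c * (q^2)^k‖ ≤ ‖c‖ := by
    intro k
    rw [norm_mul, norm_pow, norm_pow]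
    have h2 : ‖q‖^2 ≤ 1 := (pow_le_one₀ (norm_nonneg q) hq.le)
    have : (‖q‖^2)^k ≤ 1 := pow_le_one₀ (by positivity) h2
    nlinarith
  have hub : ∀ k : ℕ, ‖F q (c * (q^2)^k) - 1‖ ≤ (‖c * (q^2)^k‖ / ‖c‖) * C :=
    fun k => bound hq hcpos (hb k)
  have hlim : Tendsto (fun k : ℕ => (‖c * (q^2)^k‖ / ‖c‖) * C) atTop (𝓝 0) := by
    have h2 : ‖q‖^2 < 1 := pow_lt_one₀ (norm_nonneg q) hq (by norm_num)
    have base : Tendsto (fun k : ℕ => (‖q‖^2)^k) atTop (𝓝 0) :=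
      tendsto_pow_atTop_nhds_zero_of_lt_one (by positivity) h2
    have : Tendsto (fun k : ℕ => ‖c‖ * (‖q‖^2)^k / ‖c‖ * C) atTop (𝓝 (‖c‖ * 0 / ‖c‖ * C)) :=
      ((base.const_mul ‖c‖).div_const ‖c‖).mul_const C
    simp only [mul_zero, zero_div, zero_mul] at this
    convert this using 2 with k
    rw [norm_mul, norm_pow, norm_pow]
  exact squeeze_zero (fun k => norm_nonneg _) hub hlim

end Sec6


/-- The identity from Section 6, stated with `q` replaced by `q^4` so that all
exponents are integers. -/
theorem section_six_identity (q a : ℂ)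
    (hq0 : 0 < ‖q‖) (hq1 : ‖q‖ < 1) (ha : a ≠ 0) :
    (∑' n : ℕ, a ^ n * q ^ ((n + 1) ^ 2) / qPoch (q ^ 4) (q ^ 4) n) *
      (∑' n : ℕ, (-a) ^ n * q ^ (n ^ 2) / qPoch (q ^ 4) (q ^ 4) n)
    + (∑' n : ℕ, (-a) ^ n * q ^ ((n + 1) ^ 2) / qPoch (q ^ 4) (q ^ 4) n) *
      (∑' n : ℕ, a ^ n * q ^ (n ^ 2) / qPoch (q ^ 4) (q ^ 4) n)
    = 2 * q := by
  have hq : ‖q‖ < 1 := by exact hq1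
  have hqne : q ≠ 0 := by
    intro h; rw [h] at hq0; simp at hq0
  open Sec6 in
  have e1 : ∀ b : ℂ, (∑' n : ℕ, b ^ n * q ^ ((n + 1) ^ 2) / qPoch (q ^ 4) (q ^ 4) n)
      = q * F q (b * q^2) := by
    intro b
    rw [F, ← tsum_mul_left]
    congr 1; funext n
    rw [mul_pow, ← pow_mul,
      show (n+1)^2 = 2*n + n^2 + 1 by ring, pow_add, pow_add, pow_one]
    ring
  rw [e1 a, e1 (-a),
    show (∑' n : ℕ, (-a) ^ n * q ^ (n ^ 2) / qPoch (q ^ 4) (q ^ 4) n) = Sec6.F q (-a) from rfl,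
    show (∑' n : ℕ, a ^ n * q ^ (n ^ 2) / qPoch (q ^ 4) (q ^ 4) n) = Sec6.F q a from rfl]
  open Sec6 in
  have hstep : ∀ b : ℂ, F q (b*q^4) * F q (-(b*q^2)) + F q (-(b*q^4)) * F q (b*q^2)
      = F q (b*q^2) * F q (-b) + F q (-(b*q^2)) * F q b := by
    intro b
    have h1 := funcEq hq (-b)
    have h2 := funcEq hq b
    rw [show (-b)*q^4 = -(b*q^4) by ring, show (-b)*q^2 = -(b*q^2) by ring] at h1
    linear_combination (-(F q (b*q^2))) * h1 - F q (-(b*q^2)) * h2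
  set G : ℕ → ℂ := fun k =>
    F q ((a*q^2) * (q^2)^k) * F q ((-a) * (q^2)^k)
    + F q ((-(a*q^2)) * (q^2)^k) * F q (a * (q^2)^k) with hG
  have hiter : ∀ k, G k = G 0 := by
    intro k
    induction k with
    | zero => rfl
    | succ k ih =>
      rw [← ih, hG]
      simp only []
      rw [show (a*q^2) * (q^2)^(k+1) = (a * (q^2)^k) * q^4 by ring,
        show (-a) * (q^2)^(k+1) = -((a * (q^2)^k) * q^2) by ring,
        show (-(a*q^2)) * (q^2)^(k+1) = -((a * (q^2)^k) * q^4) by ring,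
        show a * (q^2)^(k+1) = (a * (q^2)^k) * q^2 by ring,
        show (a*q^2) * (q^2)^k = (a * (q^2)^k) * q^2 by ring,
        show (-a) * (q^2)^k = -(a * (q^2)^k) by ring,
        show (-(a*q^2)) * (q^2)^k = -((a * (q^2)^k) * q^2) by ring]
      exact hstep (a * (q^2)^k)
  have t1 := tendsto_F hq (a*q^2) (by simp [ha, hqne])
  have t2 := tendsto_F hq (-a) (by simp [ha])
  have t3 := tendsto_F hq (-(a*q^2)) (by simp [ha, hqne])
  have t4 := tendsto_F hq a ha
  have htend : Tendsto G atTop (𝓝 ((1:ℂ)*1 + 1*1)) := (t1.mul t2).add (t3.mul t4)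
  have hconst : Tendsto G atTop (𝓝 (G 0)) := by
    have : G = fun _ => G 0 := funext hiter
    rw [this]; exact tendsto_const_nhds
  have hG0 : G 0 = 2 := by
    have := tendsto_nhds_unique hconst htend
    rw [this]; norm_num
  have hG0' : F q (a*q^2) * F q (-a) + F q (-(a*q^2)) * F q a = 2 := by
    have := hG0
    simp only [hG, pow_zero, mul_one] at this
    exact this
  rw [show (-a : ℂ) * q^2 = -(a*q^2) by ring]
  linear_combination q * hG0'
end
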